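/- arXiv:2112.10242 — 9 statements merged into one kernel-verified Lean document; each statement's English description precedes it below -/
import Mathlib

section
/- Let R be a ring and (σ, δ) a skew derivation on R such that σ∘δ = δ∘σ. Then for all a, b ∈ R and all n ∈ ℕ, δ^n(ab) = Σ_{k=0}^{n} (n choose k) · δ^k(σ^{n−k}(a)) · δ^{n−k}(b), where the binomial coefficients act by integer scalar multiplication. -/
/-- **Lemma 1.1** (binomial expansion for commuting skew derivations).
If `(σ, δ)` is a skew derivation on a ring `R` with `σ ∘ δ = δ ∘ σ`, then
`δ^n(ab) = ∑_{k=0}^n (n choose k) δ^k(σ^{n-k}(a)) δ^{n-k}(b)`. -/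
theorem stmt_0 {R : Type*} [Ring R] (σ : R →+* R) (hσ : Function.Bijective σ)
    (δ : R → R) (hδadd : ∀ a b : R, δ (a + b) = δ a + δ b)
    (hleib : ∀ a b : R, δ (a * b) = δ a * b + σ a * δ b)
    (hcomm : ∀ a : R, σ (δ a) = δ (σ a)) (a b : R) (n : ℕ) :
    δ^[n] (a * b) =
      ∑ k ∈ Finset.range (n + 1),
        n.choose k • (δ^[k] ((⇑σ)^[n - k] a) * δ^[n - k] b) := by
  have D : R →+ R := AddMonoidHom.mk' δ hδadd
  have hsum : ∀ (s : Finset ℕ) (f : ℕ → R), δ (∑ i ∈ s, f i) = ∑ i ∈ s, δ (f i) :=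
    fun s f => map_sum (AddMonoidHom.mk' δ hδadd) f s
  have hsmul : ∀ (m : ℕ) (x : R), δ (m • x) = m • δ x :=
    fun m x => map_nsmul (AddMonoidHom.mk' δ hδadd) m x
  have hck : ∀ (k : ℕ) (x : R), σ (δ^[k] x) = δ^[k] (σ x) := by
    intro k
    induction k with
    | zero => intro x; simp
    | succ k ih =>
      intro x
      rw [Function.iterate_succ_apply', Function.iterate_succ_apply', hcomm, ih]
  induction n with
  | zero => simp
  | succ n ih =>
    set w : ℕ → R := fun k => δ^[k] ((⇑σ)^[n + 1 - k] a) * δ^[n + 1 - k] b with hw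
    rw [Function.iterate_succ_apply', ih, hsum]
    have hterm : ∀ k ∈ Finset.range (n + 1),
        δ (n.choose k • (δ^[k] ((⇑σ)^[n - k] a) * δ^[n - k] b))
          = n.choose k • w (k + 1) + n.choose k • w k := by
      intro k hk
      have hk' : k ≤ n := Nat.lt_succ_iff.mp (Finset.mem_range.mp hk)
      have h1 : n + 1 - (k + 1) = n - k := by omega
      have h2 : n + 1 - k = (n - k) + 1 := by omega
      rw [hsmul, hleib, smul_add, hw]
      simp only [h1, h2]
      rw [← Function.iterate_succ_apply' δ k, ← Function.iterate_succ_apply' δ (n - k), hck,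
        ← Function.iterate_succ_apply' (⇑σ) (n - k)]
    rw [Finset.sum_congr rfl hterm, Finset.sum_add_distrib]
    have hRHS : ∀ k, (n + 1).choose k • (δ^[k] ((⇑σ)^[n + 1 - k] a) * δ^[n + 1 - k] b)
        = (n + 1).choose k • w k := fun k => rfl
    calc
      (∑ k ∈ Finset.range (n + 1), n.choose k • w (k + 1))
          + ∑ k ∈ Finset.range (n + 1), n.choose k • w k
        = (∑ k ∈ Finset.range (n + 1), n.choose k • w (k + 1))
          + ((∑ k ∈ Finset.range n, n.choose (k + 1) • w (k + 1)) + n.choose 0 • w 0) := by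
            rw [Finset.sum_range_succ' (fun k => n.choose k • w k) n]
      _ = (∑ k ∈ Finset.range (n + 1), n.choose k • w (k + 1))
          + ((∑ k ∈ Finset.range (n + 1), n.choose (k + 1) • w (k + 1)) + w 0) := by
            rw [Finset.sum_range_succ (fun k => n.choose (k + 1) • w (k + 1)) n]
            simp [Nat.choose_succ_self]
      _ = (∑ k ∈ Finset.range (n + 1),
            (n.choose k • w (k + 1) + n.choose (k + 1) • w (k + 1))) + w 0 := by
            rw [Finset.sum_add_distrib, add_assoc]
      _ = (∑ k ∈ Finset.range (n + 1), (n + 1).choose (k + 1) • w (k + 1))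
          + (n + 1).choose 0 • w 0 := by
            simp only [Nat.choose_succ_succ, add_nsmul, Nat.choose_zero_right, one_smul]
      _ = ∑ k ∈ Finset.range (n + 1 + 1), (n + 1).choose k • w k :=
            (Finset.sum_range_succ' (fun k => (n + 1).choose k • w k) (n + 1)).symm
end

section
/- Let p be a prime, R a ring of characteristic p, and (σ, δ) a skew derivation on R with σ∘δ = δ∘σ. Then for every m ∈ ℕ the pair (σ^{p^m}, δ^{p^m}) is again a skew derivation on R; that is, δ^{p^m}(ab) = δ^{p^m}(a)·b + σ^{p^m}(a)·δ^{p^m}(b) for all a, b ∈ R. -/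
/-- If `R` has characteristic `p` and `(σ, δ)` is a skew derivation with `σδ = δσ`,
then `(σ^{p^m}, δ^{p^m})` is again a skew derivation:
`δ^{p^m}(ab) = δ^{p^m}(a)·b + σ^{p^m}(a)·δ^{p^m}(b)`. -/
theorem stmt_1 {R : Type*} [Ring R] (p : ℕ) (hp : p.Prime) [CharP R p]
    (σ : R →+* R) (hσ : Function.Bijective σ)
    (δ : R → R) (hδadd : ∀ a b : R, δ (a + b) = δ a + δ b)
    (hleib : ∀ a b : R, δ (a * b) = δ a * b + σ a * δ b)
    (hcomm : ∀ a : R, σ (δ a) = δ (σ a)) (m : ℕ) (a b : R) :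
    δ^[p ^ m] (a * b) = δ^[p ^ m] a * b + (⇑σ)^[p ^ m] a * δ^[p ^ m] b := by
  set D : R →+ R := AddMonoidHom.mk' δ hδadd with hD
  have hDδ : ∀ x, D x = δ x := fun x => rfl
  have hcomm' : ∀ (k : ℕ) (x : R), δ ((⇑σ)^[k] x) = (⇑σ)^[k] (δ x) := by
    intro k
    induction k with
    | zero => intro x; simp
    | succ k ih =>
      intro x
      rw [Function.iterate_succ_apply', Function.iterate_succ_apply', ← hcomm, ih]
  have leib : ∀ (n : ℕ) (a b : R), δ^[n] (a * b) =
      ∑ k ∈ Finset.range (n + 1),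
        (n.choose k) • ((⇑σ)^[k] (δ^[n - k] a) * δ^[k] b) := by
    intro n
    induction n with
    | zero => intro a b; simp
    | succ n ih =>
      intro a b
      set t : ℕ → R := fun k => (⇑σ)^[k] (δ^[n + 1 - k] a) * δ^[k] b with ht
      rw [Function.iterate_succ_apply', ih]
      have hsum : δ (∑ k ∈ Finset.range (n + 1),
          (n.choose k) • ((⇑σ)^[k] (δ^[n - k] a) * δ^[k] b)) =
          ∑ k ∈ Finset.range (n + 1),
          (n.choose k) • δ ((⇑σ)^[k] (δ^[n - k] a) * δ^[k] b) := by
        rw [← hDδ, map_sum]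
        exact Finset.sum_congr rfl fun k _ => by rw [map_nsmul]; rfl
      rw [hsum]
      have hterm : ∀ k ∈ Finset.range (n + 1),
          (n.choose k) • δ ((⇑σ)^[k] (δ^[n - k] a) * δ^[k] b) =
          (n.choose k) • t k + (n.choose k) • t (k + 1) := by
        intro k hk
        rw [Finset.mem_range] at hk
        have hk' : k ≤ n := Nat.lt_succ_iff.mp hk
        rw [hleib, smul_add, hcomm' k, ← Function.iterate_succ_apply' δ (n - k) a,
          ← Function.iterate_succ_apply' δ k b, ← Function.iterate_succ_apply' σ k]
        have h1 : n - k + 1 = n + 1 - k := by omega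
        have h2 : n - k = n + 1 - (k + 1) := by omega
        simp only [Nat.succ_eq_add_one]
        rw [h1, h2]
      rw [Finset.sum_congr rfl hterm, Finset.sum_add_distrib]
      have key : ∑ k ∈ Finset.range (n + 2), ((n + 1).choose k) • t k =
          ∑ k ∈ Finset.range (n + 1), (n.choose k) • t k +
          ∑ k ∈ Finset.range (n + 1), (n.choose k) • t (k + 1) := by
        rw [Finset.sum_range_succ']
        simp only [Nat.choose_succ_succ', add_nsmul]
        rw [Finset.sum_add_distrib]
        have : (∑ k ∈ Finset.range (n + 1), (n.choose (k + 1)) • t (k + 1)) +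
            ((n + 1).choose 0) • t 0 =
            ∑ k ∈ Finset.range (n + 2), (n.choose k) • t k := by
          rw [Finset.sum_range_succ' (fun k => (n.choose k) • t k) (n + 1)]
          simp
        rw [add_assoc, this, Finset.sum_range_succ (fun k => (n.choose k) • t k) (n + 1), Nat.choose_succ_self,
          zero_smul, add_zero, add_comm]
      rw [key]
  rw [leib (p ^ m) a b, Finset.sum_range_succ, Nat.choose_self, one_smul,
    Nat.sub_self, Function.iterate_zero_apply]
  congr 1
  rw [Finset.sum_eq_single 0]
  · simp
  · intro k hk hk0
    rw [Finset.mem_range] at hk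
    obtain ⟨c, hc⟩ := hp.dvd_choose_pow hk0 hk.ne
    rw [hc, nsmul_eq_mul, Nat.cast_mul, CharP.cast_eq_zero R p, zero_mul, zero_mul]
  · intro h
    exact absurd (Finset.mem_range.mpr (pow_pos hp.pos m)) h
end

section
/- Let p be a prime and R a ring equipped with a filtration u : R → ℤ ∪ {∞} such that u(p·1_R) ≥ 1. Let σ be a ring automorphism of R satisfying u(σ(x) − x) ≥ u(x) + 1 for all x ∈ R. Then for every n ∈ ℕ and every x ∈ R, u(σ^{p^n}(x) − x) ≥ u(x) + n. -/
/-!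
Write `δ y = τ y - y`. If `δ` raises `u` by `k ≥ 1`, then
`τ^m y - y = m • δ y + ∑_{i<m} δ (τ^i y - y)`: the first term is raised by `k + 1` because
`u(m) ≥ 1`, and each summand by `2k ≥ k + 1`. So `τ^p - 1` raises `u` by `k + 1`, and induction
on `n` with `τ = σ^{p^n}` gives the theorem.
-/

section

variable {R : Type*} [Ring R] {u : R → WithTop ℤ}

theorem add_le_iterate_sub_self (hu0 : u 0 = ⊤)
    (huadd : ∀ x y : R, min (u x) (u y) ≤ u (x + y))
    (τ : R → R) {k : WithTop ℤ} (hk : 0 ≤ k) (hτ : ∀ y, u y + k ≤ u (τ y - y)) (m : ℕ) (y : R) :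
    u y + k ≤ u (τ^[m] y - y) := by
  induction m with
  | zero => simp [hu0]
  | succ m ih =>
    set w := τ^[m] y
    have hw : u y ≤ u w := calc
      u y ≤ min (u (w - y)) (u y) := le_min ((le_add_of_nonneg_right hk).trans ih) le_rfl
      _ ≤ u w := by simpa using huadd (w - y) y
    have hsplit : τ^[m + 1] y - y = (τ w - w) + (w - y) := by
      rw [Function.iterate_succ_apply']; abel
    rw [hsplit]
    exact (le_min ((add_le_add_left hw k).trans (hτ w)) ih).trans (huadd _ _)

variable {F : Type*} [FunLike F R R] [AddMonoidHomClass F R R]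

theorem add_add_le_iterate_sub_self_sub_nsmul (hu0 : u 0 = ⊤)
    (huadd : ∀ x y : R, min (u x) (u y) ≤ u (x + y))
    (τ : F) {k : WithTop ℤ} (hk : 0 ≤ k) (hτ : ∀ y, u y + k ≤ u (τ y - y)) (m : ℕ) (y : R) :
    u y + (k + k) ≤ u (τ^[m] y - y - m • (τ y - y)) := by
  induction m with
  | zero => simp [hu0]
  | succ m ih =>
    have hsplit : (⇑τ)^[m + 1] y - y - (m + 1) • (τ y - y) = ((⇑τ)^[m] y - y - m • (τ y - y))
        + (τ ((⇑τ)^[m] y - y) - ((⇑τ)^[m] y - y)) := by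
      rw [Function.iterate_succ_apply', map_sub, succ_nsmul]; abel
    have hz : u y + (k + k) ≤ u (τ ((⇑τ)^[m] y - y) - ((⇑τ)^[m] y - y)) := by
      rw [← add_assoc]
      exact (add_le_add_left (add_le_iterate_sub_self hu0 huadd τ hk hτ m y) k).trans (hτ _)
    rw [hsplit]
    exact (le_min ih hz).trans (huadd _ _)

theorem add_add_one_le_iterate_sub_self (hu0 : u 0 = ⊤)
    (huadd : ∀ x y : R, min (u x) (u y) ≤ u (x + y))
    (humul : ∀ x y : R, u x + u y ≤ u (x * y))
    (τ : F) {k : WithTop ℤ} (hk : 1 ≤ k) (hτ : ∀ y, u y + k ≤ u (τ y - y))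
    {m : ℕ} (hm : 1 ≤ u (m : R)) (y : R) :
    u y + (k + 1) ≤ u ((⇑τ)^[m] y - y) := by
  have hlin : u y + (k + 1) ≤ u (m • (τ y - y)) := calc
    u y + (k + 1) = 1 + (u y + k) := by ac_rfl
    _ ≤ u (m : R) + u (τ y - y) := add_le_add hm (hτ y)
    _ ≤ u (m • (τ y - y)) := by rw [nsmul_eq_mul]; exact humul _ _
  have hrest : u y + (k + 1) ≤ u ((⇑τ)^[m] y - y - m • (τ y - y)) :=
    (add_le_add_right (add_le_add_right hk k) (u y)).trans
      (add_add_le_iterate_sub_self_sub_nsmul hu0 huadd τ (zero_le_one.trans hk) hτ m y)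
  simpa using (le_min hlin hrest).trans (huadd _ _)

end

theorem stmt_2_general {R : Type*} [Ring R] (p : ℕ)
    (u : R → WithTop ℤ)
    (hu0 : u 0 = ⊤)
    (huadd : ∀ x y : R, min (u x) (u y) ≤ u (x + y))
    (humul : ∀ x y : R, u x + u y ≤ u (x * y))
    (hup : 1 ≤ u ((p : R)))
    (σ : R →+* R)
    (hcompat : ∀ x : R, u x + 1 ≤ u (σ x - x))
    (n : ℕ) (x : R) :
    u x + (n : WithTop ℤ) ≤ u ((⇑σ)^[p ^ n] x - x) := by
  have key : ∀ y, u y + ((n : WithTop ℤ) + 1) ≤ u ((⇑σ)^[p ^ n] y - y) := by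
    induction n with
    | zero => simpa using hcompat
    | succ n ih =>
      intro y
      rw [pow_succ, Function.iterate_mul, ← RingHom.coe_pow, Nat.cast_succ]
      refine add_add_one_le_iterate_sub_self hu0 huadd humul (σ ^ p ^ n) ?_ ?_ hup y
      · exact le_add_of_nonneg_left (Nat.cast_nonneg' n)
      · simpa only [RingHom.coe_pow] using ih
  exact (add_le_add_right (le_add_of_nonneg_right zero_le_one) (u x)).trans (key x)

/-- If `u` is a ring filtration with `u(p·1) ≥ 1` and `σ` is a ring automorphism with
`u(σ(x) − x) ≥ u(x) + 1` for all `x`, then `u(σ^{p^n}(x) − x) ≥ u(x) + n`. -/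
theorem stmt_2 {R : Type*} [Ring R] (p : ℕ) (hp : p.Prime)
    (u : R → WithTop ℤ)
    (hu0 : u 0 = ⊤)
    (huadd : ∀ x y : R, min (u x) (u y) ≤ u (x + y))
    (humul : ∀ x y : R, u x + u y ≤ u (x * y))
    (hup : 1 ≤ u ((p : R)))
    (σ : R →+* R) (hσ : Function.Bijective σ)
    (hcompat : ∀ x : R, u x + 1 ≤ u (σ x - x))
    (n : ℕ) (x : R) :
    u x + (n : WithTop ℤ) ≤ u ((⇑σ)^[p ^ n] x - x) :=
  stmt_2_general p u hu0 huadd humul hup σ hcompat n x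
end

section
/- Let R be a ring, q a central unit of R, (σ, δ) a q-skew derivation on R, and N a two-sided ideal of R with σ(N) = N. Suppose n is a positive integer such that δ^n(x) = 0 for all x ∈ N^n, and such that {n!}_q is invertible in R. Then δ(s₁)·δ(s₂)···δ(s_n) ∈ N for all s₁, …, s_n ∈ N; that is, δ(N)^n ⊆ N. -/
/-- The `n`-th power of an ideal with underlying set `S`: finite sums (and differences)
of `n`-fold products of elements of `S`. -/
def setProdPow {R : Type*} [Ring R] (S : Set R) (n : ℕ) : AddSubgroup R :=
  AddSubgroup.closure {x | ∃ l : List R, l.length = n ∧ (∀ y ∈ l, y ∈ S) ∧ x = l.prod}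

/-- `{n!}_q = ∏_{k=1}^{n} (1 + q + ⋯ + q^{k−1})`. -/
def qFactorial {R : Type*} [Ring R] (q : R) (n : ℕ) : R :=
  ((List.range n).map fun k => ∑ i ∈ Finset.range (k + 1), q ^ i).prod

/-!
A `q`-Leibniz rule: `δ^[j+1] (a * b)` is `σ^[j+1] a * δ^[j+1] b + [j+1]_q σ^[j] (δ a) * δ^[j] b`
modulo the left ideal generated by `b, δ b, …, δ^[j-1] b`. Applied to products of `m` elements
of `N`, it shows by induction on `m` that `δ^[j]` maps them into `N` for `j < m`, and that
`δ^[m] (a₁ ⋯ aₘ) ≡ {m!}_q σ^[m-1] (δ a₁) ⋯ σ^[0] (δ aₘ)` modulo `N`. For `m = n` the left side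
vanishes, so the twisted product lies in `N` because `{n!}_q` is a unit. Since `σ` maps `N` onto
itself and `δ ∘ σ^[k] = q^k • σ^[k] ∘ δ`, every product `δ s₁ ⋯ δ sₙ` with `sᵢ ∈ N` is a power of
`q` times such a twisted product.
-/

section

open Finset

variable {R : Type*} [Ring R]

structure IsQSkewDerivation (q : R) (σ : R →+* R) (δ : R → R) : Prop where
  map_add' : ∀ a b, δ (a + b) = δ a + δ b
  map_mul' : ∀ a b, δ (a * b) = δ a * b + σ a * δ b
  map_σ : ∀ x, δ (σ x) = q * σ (δ x)
  σ_q : σ q = q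
  δ_q : δ q = 0
  commute_q : ∀ r, Commute q r

def iterateSpan (f : R → R) (b : R) (m : ℕ) : Ideal R :=
  Ideal.span ((fun i => f^[i] b) '' Set.Iio m)

theorem iterateSpan_mono (f : R → R) (b : R) {m m' : ℕ} (h : m ≤ m') :
    iterateSpan f b m ≤ iterateSpan f b m' :=
  Ideal.span_mono (Set.image_mono (Set.Iio_subset_Iio h))

theorem iterate_mem_iterateSpan (f : R → R) (b : R) {i m : ℕ} (h : i < m) :
    f^[i] b ∈ iterateSpan f b m :=
  Ideal.subset_span ⟨i, h, rfl⟩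

theorem iterateSpan_le_asIdeal {f : R → R} {b : R} {m : ℕ} {N : TwoSidedIdeal R}
    (h : ∀ i < m, f^[i] b ∈ N) : iterateSpan f b m ≤ N.asIdeal :=
  Ideal.span_le.2 <| by
    rintro _ ⟨i, hi, rfl⟩
    exact TwoSidedIdeal.mem_asIdeal.2 (h i hi)

def twistedProd (σ : R →+* R) (δ : R → R) : List R → R
  | [] => 1
  | a :: t => σ^[t.length] (δ a) * twistedProd σ δ t

theorem qFactorial_succ (q : R) (m : ℕ) :
    qFactorial q (m + 1) = qFactorial q m * ∑ i ∈ range (m + 1), q ^ i := by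
  simp [qFactorial, List.range_succ]

theorem Commute.qFactorial_left {q r : R} (h : Commute q r) (m : ℕ) :
    Commute (qFactorial q m) r :=
  Commute.list_prod_left _ _ <| by
    simp only [List.mem_map, List.mem_range]
    rintro _ ⟨k, -, rfl⟩
    exact Commute.sum_left _ _ _ fun i _ => h.pow_left i

namespace IsQSkewDerivation

variable {q : R} {σ : R →+* R} {δ : R → R}

def toAddMonoidHom (hD : IsQSkewDerivation q σ δ) : R →+ R :=
  AddMonoidHom.mk' δ hD.map_add'

theorem map_zero (hD : IsQSkewDerivation q σ δ) : δ 0 = 0 :=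
  hD.toAddMonoidHom.map_zero

theorem map_pow_q_mul (hD : IsQSkewDerivation q σ δ) (i : ℕ) (x : R) :
    δ (q ^ i * x) = q ^ i * δ x := by
  induction i generalizing x with
  | zero => simp
  | succ i ih => rw [pow_succ, mul_assoc, ih, hD.map_mul', hD.δ_q, hD.σ_q, zero_mul, zero_add,
      mul_assoc]

theorem map_geom_sum_mul (hD : IsQSkewDerivation q σ δ) (j : ℕ) (x : R) :
    δ ((∑ i ∈ range j, q ^ i) * x) = (∑ i ∈ range j, q ^ i) * δ x := by
  simp only [Finset.sum_mul]
  exact (map_sum hD.toAddMonoidHom _ _).trans (Finset.sum_congr rfl fun i _ => hD.map_pow_q_mul i x)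

theorem map_iterate_σ (hD : IsQSkewDerivation q σ δ) (k : ℕ) (x : R) :
    δ (σ^[k] x) = q ^ k * σ^[k] (δ x) := by
  induction k with
  | zero => simp
  | succ k ih =>
    rw [Function.iterate_succ_apply', hD.map_σ, ih, map_mul, map_pow, hD.σ_q,
      Function.iterate_succ_apply', ← mul_assoc, pow_succ']

theorem map_mem_iterateSpan (hD : IsQSkewDerivation q σ δ) {b x : R} {m : ℕ}
    (hx : x ∈ iterateSpan δ b m) : δ x ∈ iterateSpan δ b (m + 1) := by
  induction hx using Submodule.span_induction with
  | mem y hy =>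
    obtain ⟨i, hi, rfl⟩ := hy
    rw [← Function.iterate_succ_apply' δ]
    exact iterate_mem_iterateSpan δ b (Nat.succ_lt_succ hi)
  | zero => rw [hD.map_zero]; exact zero_mem _
  | add y z _ _ hy hz => rw [hD.map_add']; exact add_mem hy hz
  | smul r y hy ihy =>
    rw [smul_eq_mul, hD.map_mul']
    exact add_mem (Ideal.mul_mem_left _ _ (iterateSpan_mono δ b m.le_succ hy))
      (Ideal.mul_mem_left _ _ ihy)

theorem iterate_succ_mul_sub_mem (hD : IsQSkewDerivation q σ δ) (a b : R) (j : ℕ) :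
    δ^[j + 1] (a * b) - σ^[j + 1] a * δ^[j + 1] b
      - (∑ i ∈ range (j + 1), q ^ i) * (σ^[j] (δ a) * δ^[j] b) ∈ iterateSpan δ b j := by
  induction j with
  | zero => simp [hD.map_mul']
  | succ j ih =>
    set r := δ^[j + 1] (a * b) - σ^[j + 1] a * δ^[j + 1] b
      - (∑ i ∈ range (j + 1), q ^ i) * (σ^[j] (δ a) * δ^[j] b) with hr
    have hexpand : δ^[j + 2] (a * b) = δ (σ^[j + 1] a * δ^[j + 1] b
        + (∑ i ∈ range (j + 1), q ^ i) * (σ^[j] (δ a) * δ^[j] b) + r) := by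
      rw [hr, Function.iterate_succ_apply']
      congr 1
      abel
    have key : δ^[j + 2] (a * b) - σ^[j + 2] a * δ^[j + 2] b
        - (∑ i ∈ range (j + 2), q ^ i) * (σ^[j + 1] (δ a) * δ^[j + 1] b)
        = (∑ i ∈ range (j + 1), q ^ i) * q ^ j * (σ^[j] (δ (δ a)) * δ^[j] b) + δ r := by
      rw [hexpand, hD.map_add', hD.map_add', hD.map_mul', hD.map_geom_sum_mul, hD.map_mul',
        hD.map_iterate_σ, hD.map_iterate_σ, sum_range_succ _ (j + 1)]
      simp only [Function.iterate_succ_apply']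
      noncomm_ring
    rw [key]
    exact add_mem (Ideal.mul_mem_left _ _ (Ideal.mul_mem_left _ _
      (iterate_mem_iterateSpan δ b j.lt_succ_self))) (hD.map_mem_iterateSpan ih)


theorem iterate_mul_sub_mem (hD : IsQSkewDerivation q σ δ) (a b : R) (j : ℕ) :
    δ^[j] (a * b) - σ^[j] a * δ^[j] b ∈ iterateSpan δ b j := by
  cases j with
  | zero => simp
  | succ j =>
    have h := add_mem (iterateSpan_mono δ b j.le_succ (hD.iterate_succ_mul_sub_mem a b j))
      (Ideal.mul_mem_left _ (∑ i ∈ range (j + 1), q ^ i) (Ideal.mul_mem_left _ (σ^[j] (δ a))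
        (iterate_mem_iterateSpan δ b j.lt_succ_self)))
    rwa [sub_add_cancel] at h

variable {N : TwoSidedIdeal R}

theorem iterate_prod_mem_of_lt (hD : IsQSkewDerivation q σ δ) (hσN : Set.MapsTo σ N N)
    {l : List R} (hl : ∀ y ∈ l, y ∈ N) {j : ℕ} (hj : j < l.length) : δ^[j] l.prod ∈ N := by
  induction l generalizing j with
  | nil => exact absurd hj (Nat.not_lt_zero j)
  | cons a t ih =>
    have hlow : iterateSpan δ t.prod j ≤ N.asIdeal := iterateSpan_le_asIdeal fun i hi =>
      ih (fun y hy => hl y (List.mem_cons_of_mem a hy)) (by simp at hj; omega)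
    rw [List.prod_cons, ← sub_add_cancel (δ^[j] (a * t.prod)) (σ^[j] a * δ^[j] t.prod)]
    exact N.add_mem (TwoSidedIdeal.mem_asIdeal.1 (hlow (hD.iterate_mul_sub_mem a t.prod j)))
      (N.mul_mem_right _ _ (hσN.iterate j (hl a List.mem_cons_self)))

theorem iterate_length_prod_sub_mem (hD : IsQSkewDerivation q σ δ) (hσN : Set.MapsTo σ N N)
    {l : List R} (hl : ∀ y ∈ l, y ∈ N) :
    δ^[l.length] l.prod - qFactorial q l.length * twistedProd σ δ l ∈ N := by
  induction l with
  | nil => simp [qFactorial, twistedProd]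
  | cons a t ih =>
    have ht : ∀ y ∈ t, y ∈ N := fun y hy => hl y (List.mem_cons_of_mem a hy)
    have hlow : iterateSpan δ t.prod t.length ≤ N.asIdeal :=
      iterateSpan_le_asIdeal fun i hi => hD.iterate_prod_mem_of_lt hσN ht hi
    set m := t.length
    set c := ∑ i ∈ range (m + 1), q ^ i
    set s := σ^[m] (δ a)
    have hF : s * qFactorial q m = qFactorial q m * s := ((hD.commute_q s).qFactorial_left m).symm
    have hc : qFactorial q m * c = c * qFactorial q m := (hD.commute_q c).qFactorial_left m
    have key : δ^[m + 1] (a * t.prod) - qFactorial q (m + 1) * (s * twistedProd σ δ t)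
        = (δ^[m + 1] (a * t.prod) - σ^[m + 1] a * δ^[m + 1] t.prod - c * (s * δ^[m] t.prod))
          + σ^[m + 1] a * δ^[m + 1] t.prod
          + c * (s * (δ^[m] t.prod - qFactorial q m * twistedProd σ δ t)) := by
      rw [qFactorial_succ, hc, mul_sub s, ← mul_assoc s, hF]
      noncomm_ring
    rw [List.length_cons, List.prod_cons, twistedProd, key]
    exact N.add_mem (N.add_mem
      (TwoSidedIdeal.mem_asIdeal.1 (hlow (hD.iterate_succ_mul_sub_mem a t.prod m)))
      (N.mul_mem_right _ _ (hσN.iterate (m + 1) (hl a List.mem_cons_self))))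
      (N.mul_mem_left _ _ (N.mul_mem_left _ _ (ih ht)))

theorem exists_map_prod_eq_pow_mul_twistedProd (hD : IsQSkewDerivation q σ δ)
    (hσN : Set.SurjOn σ N N) {l : List R} (hl : ∀ y ∈ l, y ∈ N) :
    ∃ l' : List R, l'.length = l.length ∧ (∀ y ∈ l', y ∈ N) ∧
      ∃ K : ℕ, (l.map δ).prod = q ^ K * twistedProd σ δ l' := by
  induction l with
  | nil => exact ⟨[], rfl, by simp, 0, by simp [twistedProd]⟩
  | cons a t ih =>
    obtain ⟨t', ht'len, ht'N, K, hK⟩ := ih fun y hy => hl y (List.mem_cons_of_mem a hy)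
    obtain ⟨b, hb, rfl⟩ := hσN.iterate t.length (hl a List.mem_cons_self)
    refine ⟨b :: t', by simp [ht'len], ?_, t.length + K, ?_⟩
    · simpa using ⟨hb, ht'N⟩
    · rw [List.map_cons, List.prod_cons, hK, hD.map_iterate_σ, twistedProd, ht'len, pow_add,
        mul_assoc, ← mul_assoc _ (q ^ K), ← ((hD.commute_q _).pow_left K).eq]
      noncomm_ring

end IsQSkewDerivation

end

theorem stmt_4_general {R : Type*} [Ring R] (q : R) (hqc : ∀ r : R, q * r = r * q)
    (σ : R →+* R)
    (δ : R → R) (hδadd : ∀ a b : R, δ (a + b) = δ a + δ b)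
    (hleib : ∀ a b : R, δ (a * b) = δ a * b + σ a * δ b)
    (hqskew : ∀ x : R, δ (σ x) = q * σ (δ x)) (hσq : σ q = q) (hδq : δ q = 0)
    (N : TwoSidedIdeal R) (hN : (fun x : R => σ x) '' (N : Set R) = (N : Set R))
    (n : ℕ)
    (hnil : ∀ x ∈ setProdPow (N : Set R) n, δ^[n] x = 0)
    (hfac : IsUnit (qFactorial q n)) :
    ∀ l : List R, l.length = n → (∀ y ∈ l, y ∈ N) → (l.map δ).prod ∈ N := by
  intro l hlen hl
  have hD : IsQSkewDerivation q σ δ := ⟨hδadd, hleib, hqskew, hσq, hδq, hqc⟩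
  have hσN : Set.MapsTo σ N N := Set.image_subset_iff.1 hN.le
  obtain ⟨l', hlen', hl', K, hK⟩ := hD.exists_map_prod_eq_pow_mul_twistedProd hN.ge hl
  have hvanish : δ^[n] l'.prod = 0 :=
    hnil _ (AddSubgroup.subset_closure ⟨l', hlen'.trans hlen, hl', rfl⟩)
  have hlead := hD.iterate_length_prod_sub_mem hσN hl'
  rw [hlen', hlen, hvanish, zero_sub, neg_mem_iff] at hlead
  have hT : twistedProd σ δ l' ∈ N := by
    simpa [← mul_assoc] using N.mul_mem_left ↑hfac.unit⁻¹ _ hlead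
  rw [hK]
  exact N.mul_mem_left _ _ hT

/-- If `(σ, δ)` is a `q`-skew derivation, `N` a two-sided ideal with `σ(N) = N`,
`δ^n(N^n) = 0`, and `{n!}_q` invertible, then `δ(N)^n ⊆ N`. -/
theorem stmt_4 {R : Type*} [Ring R] (q : R) (hq : IsUnit q) (hqc : ∀ r : R, q * r = r * q)
    (σ : R →+* R) (hσ : Function.Bijective σ)
    (δ : R → R) (hδadd : ∀ a b : R, δ (a + b) = δ a + δ b)
    (hleib : ∀ a b : R, δ (a * b) = δ a * b + σ a * δ b)
    (hqskew : ∀ x : R, δ (σ x) = q * σ (δ x)) (hσq : σ q = q) (hδq : δ q = 0)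
    (N : TwoSidedIdeal R) (hN : (fun x : R => σ x) '' (N : Set R) = (N : Set R))
    (n : ℕ) (hn : 0 < n)
    (hnil : ∀ x ∈ setProdPow (N : Set R) n, δ^[n] x = 0)
    (hfac : IsUnit (qFactorial q n)) :
    ∀ l : List R, l.length = n → (∀ y ∈ l, y ∈ N) → (l.map δ).prod ∈ N :=
  stmt_4_general q hqc σ δ hδadd hleib hqskew hσq hδq N hN n hnil hfac
end

section
/- Let p be a prime, R a ring of characteristic p, and (σ, δ) a skew derivation on R with σ∘δ = δ∘σ. Then for every n ∈ ℕ there is a family of natural numbers α_{i,j,k}, indexed by the finitely many triples (i, j, k) with [i]+[j]+[k] = [n], such that p does not divide α_{i,j,k} for each such triple, and for all a, x, b ∈ R: δ^n(axb) = Σ_{[i]+[j]+[k]=[n]} α_{i,j,k} · δ^i(σ^{n−i}(a)) · δ^j(σ^k(x)) · δ^k(b). Moreover every triple (i, j, k) with [i]+[j]+[k] = [n] satisfies i + j + k = n. -/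
/-- `[i] + [j] + [k] = [n]` in base `p`: at every position the base-`p` digits of
`i`, `j`, `k` sum (without carrying) to the corresponding digit of `n`. -/
def NoCarry3 (p i j k n : ℕ) : Prop :=
  ∀ t : ℕ, i / p ^ t % p + j / p ^ t % p + k / p ^ t % p = n / p ^ t % p

attribute [local instance] Classical.propDecidable

lemma digit_div (p x t : ℕ) : x / p / p ^ t % p = x / p ^ (t + 1) % p := by
  rw [Nat.div_div_eq_div_mul, ← pow_succ']

lemma noCarry3_sum_aux (p : ℕ) (hp : 2 ≤ p) :
    ∀ m i j k n, i + j + k + n ≤ m → NoCarry3 p i j k n → i + j + k = n := by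
  intro m
  induction m with
  | zero =>
    intro i j k n hle _; omega
  | succ m ih =>
    intro i j k n hle h
    rcases Nat.eq_zero_or_pos (i + j + k + n) with h0 | hpos
    · have hn := h 0
      simp only [pow_zero, Nat.div_one] at hn
      omega
    have h0 := h 0
    simp only [pow_zero, Nat.div_one] at h0
    have hq : NoCarry3 p (i / p) (j / p) (k / p) (n / p) := by
      intro t
      simpa only [digit_div] using h (t + 1)
    have hd1 : i / p ≤ i := Nat.div_le_self _ _
    have hd2 : j / p ≤ j := Nat.div_le_self _ _
    have hd3 : k / p ≤ k := Nat.div_le_self _ _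
    have hd4 : n / p ≤ n := Nat.div_le_self _ _
    have hs1 : 0 < i → i / p < i := fun h' => Nat.div_lt_self h' hp
    have hs2 : 0 < j → j / p < j := fun h' => Nat.div_lt_self h' hp
    have hs3 : 0 < k → k / p < k := fun h' => Nat.div_lt_self h' hp
    have hs4 : 0 < n → n / p < n := fun h' => Nat.div_lt_self h' hp
    have hih := ih (i / p) (j / p) (k / p) (n / p) (by omega) hq
    calc i + j + k
        = (p * (i / p) + i % p) + (p * (j / p) + j % p) + (p * (k / p) + k % p) := by
          rw [Nat.div_add_mod, Nat.div_add_mod, Nat.div_add_mod]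
      _ = p * (i / p + j / p + k / p) + (i % p + j % p + k % p) := by ring
      _ = p * (n / p) + n % p := by rw [hih, h0]
      _ = n := Nat.div_add_mod n p

lemma noCarry3_sum (p : ℕ) (hp : 2 ≤ p) {i j k n : ℕ} (h : NoCarry3 p i j k n) :
    i + j + k = n :=
  noCarry3_sum_aux p hp _ i j k n le_rfl h


def NC2 (p x y : ℕ) : Prop :=
  ∀ t : ℕ, x / p ^ t % p + y / p ^ t % p = (x + y) / p ^ t % p

lemma digit_div' (p x t : ℕ) : x / p / p ^ t % p = x / p ^ (t + 1) % p := by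
  rw [Nat.div_div_eq_div_mul, ← pow_succ']

lemma nocarry_div {p a b : ℕ} (hp : 0 < p) (h : a % p + b % p < p) :
    (a + b) / p = a / p + b / p := by
  rw [Nat.add_div hp, if_neg (by omega)]; omega

lemma nocarry_mod {p a b : ℕ} (hp : 0 < p) (h : a % p + b % p < p) :
    (a + b) % p = a % p + b % p := by
  rw [Nat.add_mod, Nat.mod_eq_of_lt h]

lemma noCarry3_nc2_aux (p : ℕ) (hp : 2 ≤ p) :
    ∀ m i j k, i + j + k ≤ m → NoCarry3 p i j k (i + j + k) → NC2 p j k := by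
  intro m
  induction m with
  | zero =>
    intro i j k hle _
    have : j = 0 ∧ k = 0 := by omega
    intro t; simp [this.1, this.2]
  | succ m ih =>
    intro i j k hle h
    rcases Nat.eq_zero_or_pos (i + j + k) with h0 | hpos
    · have : j = 0 ∧ k = 0 := by omega
      intro t; simp [this.1, this.2]
    have hppos : 0 < p := by omega
    have h0 := h 0
    simp only [pow_zero, Nat.div_one] at h0
    have hnlt : (i + j + k) % p < p := Nat.mod_lt _ hppos
    have hlt : i % p + j % p + k % p < p := by omega
    have hjk : j % p + k % p < p := by omega
    have hdjk : (j + k) / p = j / p + k / p := nocarry_div hppos hjk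
    have hijk : i % p + (j + k) % p < p := by
      rw [nocarry_mod hppos hjk]; omega
    have hdijk : (i + j + k) / p = i / p + (j / p + k / p) := by
      rw [show i + j + k = i + (j + k) by ring, nocarry_div hppos hijk, hdjk]
    have hq : NoCarry3 p (i / p) (j / p) (k / p) (i / p + j / p + k / p) := by
      intro t
      have := h (t + 1)
      simp only [← digit_div'] at this
      rw [hdijk] at this
      convert this using 3
      ring
    have hs1 : 0 < i → i / p < i := fun h' => Nat.div_lt_self h' hp
    have hs2 : 0 < j → j / p < j := fun h' => Nat.div_lt_self h' hp
    have hs3 : 0 < k → k / p < k := fun h' => Nat.div_lt_self h' hp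
    have hd1 : i / p ≤ i := Nat.div_le_self _ _
    have hd2 : j / p ≤ j := Nat.div_le_self _ _
    have hd3 : k / p ≤ k := Nat.div_le_self _ _
    have hih := ih (i / p) (j / p) (k / p) (by omega) hq
    intro t
    cases t with
    | zero =>
      simp only [pow_zero, Nat.div_one]
      exact (nocarry_mod hppos hjk).symm
    | succ t =>
      rw [← digit_div' p j t, ← digit_div' p k t, ← digit_div' p (j + k) t, hdjk]
      exact hih t


lemma not_dvd_choose_of_lt {p m r : ℕ} (hp : p.Prime) (hm : m < p) (hr : r ≤ m) :
    ¬ p ∣ m.choose r := by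
  intro hd
  have h1 : m.choose r * (Nat.factorial r * Nat.factorial (m - r)) = Nat.factorial m := by
    rw [← mul_assoc]; exact Nat.choose_mul_factorial_mul_factorial hr
  have : p ∣ Nat.factorial m := h1 ▸ hd.mul_right _
  exact absurd (hp.dvd_factorial.mp this) (by omega)

lemma kummer2_aux (p : ℕ) (hp : p.Prime) :
    ∀ m x y, x + y ≤ m → (¬ p ∣ (x + y).choose x ↔ NC2 p x y) := by
  haveI : Fact p.Prime := ⟨hp⟩
  have hp2 : 2 ≤ p := hp.two_le
  intro m
  induction m with
  | zero =>
    intro x y hle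
    have hx : x = 0 := by omega
    have hy : y = 0 := by omega
    subst hx; subst hy
    simp only [Nat.choose_self, Nat.dvd_one]
    constructor
    · intro _ t; simp
    · intro _ h1; omega
  | succ m ih =>
    intro x y hle
    rcases Nat.eq_zero_or_pos (x + y) with h0 | hpos
    · have hx : x = 0 := by omega
      have hy : y = 0 := by omega
      subst hx; subst hy
      simp only [Nat.choose_self, Nat.dvd_one]
      constructor
      · intro _ t; simp
      · intro _ h1; omega
    have hppos : 0 < p := by omega
    have hlucas := (Choose.choose_modEq_choose_mod_mul_choose_div_nat (p := p)
      (n := x + y) (k := x))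
    have hdvd_iff : p ∣ (x + y).choose x ↔
        p ∣ ((x + y) % p).choose (x % p) * ((x + y) / p).choose (x / p) := by
      constructor
      · intro hd
        have := (Nat.modEq_zero_iff_dvd).mpr hd
        exact (Nat.modEq_zero_iff_dvd).mp (this.symm.trans hlucas).symm
      · intro hd
        have := (Nat.modEq_zero_iff_dvd).mpr hd
        exact (Nat.modEq_zero_iff_dvd).mp (hlucas.trans this)
    by_cases hc : x % p + y % p < p
    · -- no carry at digit 0
      have hmod : (x + y) % p = x % p + y % p := by
        rw [Nat.add_mod, Nat.mod_eq_of_lt hc]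
      have hdiv : (x + y) / p = x / p + y / p := by
        rw [Nat.add_div hppos, if_neg (by omega)]; omega
      have h1 : ¬ p ∣ ((x + y) % p).choose (x % p) := by
        rw [hmod]
        exact not_dvd_choose_of_lt hp (by omega) (by omega)
      have hih := ih (x / p) (y / p)
        (by
          have := Nat.div_lt_self hpos hp2
          have h2 : x / p ≤ x := Nat.div_le_self _ _
          have h3 : y / p ≤ y := Nat.div_le_self _ _
          have h4 : (x + y) / p < x + y := Nat.div_lt_self hpos hp2
          omega)
      rw [← hdiv] at hih
      constructor
      · intro hnd t
        cases t with
        | zero => simpa [hmod] using rfl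
        | succ t =>
          have hB : ¬ p ∣ ((x + y) / p).choose (x / p) := by
            intro hd
            exact hnd (hdvd_iff.mpr (Dvd.dvd.mul_left hd _))
          have hq := (hih.mp hB) t
          rw [← digit_div' p x t, ← digit_div' p y t, ← digit_div' p (x + y) t, hdiv]
          exact hq
      · intro hnc
        have hB : NC2 p (x / p) (y / p) := by
          intro t
          have hq := hnc (t + 1)
          rw [← digit_div' p x t, ← digit_div' p y t, ← digit_div' p (x + y) t, hdiv] at hq
          exact hq
        intro hd
        rcases hp.dvd_mul.mp (hdvd_iff.mp hd) with hA | hB'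
        · exact h1 hA
        · exact (hih.mpr hB) hB'
    · -- carry at digit 0: both sides false
      have hmod : (x + y) % p = x % p + y % p - p := by
        have hxy : x % p < p := Nat.mod_lt _ hppos
        have hyy : y % p < p := Nat.mod_lt _ hppos
        rw [Nat.add_mod, Nat.mod_eq_sub_mod (by omega), Nat.mod_eq_of_lt (by omega)]
      have hlt : (x + y) % p < x % p := by
        have : y % p < p := Nat.mod_lt _ hppos
        omega
      have hzero : ((x + y) % p).choose (x % p) = 0 := Nat.choose_eq_zero_of_lt hlt
      constructor
      · intro hnd
        exact absurd (hdvd_iff.mpr (by rw [hzero, zero_mul]; exact dvd_zero p)) hnd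
      · intro hnc
        have := hnc 0
        simp only [pow_zero, Nat.div_one] at this
        have : (x + y) % p < p := Nat.mod_lt _ hppos
        omega


lemma skew_leibniz {R : Type*} [Ring R] (σ : R →+* R) (δ : R → R)
    (hδadd : ∀ a b : R, δ (a + b) = δ a + δ b)
    (hleib : ∀ a b : R, δ (a * b) = δ a * b + σ a * δ b)
    (hcomm : ∀ a : R, σ (δ a) = δ (σ a)) :
    ∀ (m : ℕ) (u v : R), δ^[m] (u * v) =
      ∑ i ∈ Finset.range (m + 1),
        m.choose i • (δ^[i] ((⇑σ)^[m - i] u) * δ^[m - i] v) := by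
  have hiter_add : ∀ (m : ℕ) (a b : R), δ^[m] (a + b) = δ^[m] a + δ^[m] b := by
    intro m
    induction m with
    | zero => intro a b; simp
    | succ m ih =>
      intro a b
      rw [Function.iterate_succ_apply, hδadd, ih, ← Function.iterate_succ_apply,
        ← Function.iterate_succ_apply]
  have hcommit : ∀ (s : ℕ) (a : R), (⇑σ)^[s] (δ a) = δ ((⇑σ)^[s] a) := by
    intro s
    induction s with
    | zero => intro a; simp
    | succ s ih =>
      intro a
      rw [Function.iterate_succ_apply, hcomm, ih, ← Function.iterate_succ_apply]
  intro m
  induction m with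
  | zero => intro u v; simp
  | succ m ih =>
    intro u v
    have step : δ^[m + 1] (u * v) = δ^[m] (δ u * v) + δ^[m] (σ u * δ v) := by
      rw [Function.iterate_succ_apply, hleib, hiter_add]
    rw [step, ih (δ u) v, ih (σ u) (δ v)]
    -- abbreviation for the target terms
    set T : ℕ → R := fun i => δ^[i] ((⇑σ)^[m + 1 - i] u) * δ^[m + 1 - i] v with hT
    have hS1 : ∑ i ∈ Finset.range (m + 1),
        m.choose i • (δ^[i] ((⇑σ)^[m - i] (δ u)) * δ^[m - i] v)
        = ∑ i ∈ Finset.range (m + 1), m.choose i • T (i + 1) := by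
      apply Finset.sum_congr rfl
      intro i hi
      have hle : i ≤ m := by simpa [Nat.lt_succ_iff] using hi
      rw [hT]
      simp only []
      rw [hcommit, ← Function.iterate_succ_apply δ, Nat.succ_sub_succ]
    have hS2 : ∑ i ∈ Finset.range (m + 1),
        m.choose i • (δ^[i] ((⇑σ)^[m - i] (σ u)) * δ^[m - i] (δ v))
        = ∑ i ∈ Finset.range (m + 1), m.choose i • T i := by
      apply Finset.sum_congr rfl
      intro i hi
      have hle : i ≤ m := by simpa [Nat.lt_succ_iff] using hi
      have e1 : (⇑σ)^[m - i] (σ u) = (⇑σ)^[m + 1 - i] u := by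
        rw [← Function.iterate_succ_apply (⇑σ), Nat.succ_sub hle]
      have e2 : δ^[m - i] (δ v) = δ^[m + 1 - i] v := by
        rw [← Function.iterate_succ_apply δ, Nat.succ_sub hle]
      rw [hT]
      simp only []
      rw [e1, e2]
    rw [hS1, hS2]
    rw [Finset.sum_range_succ' (fun i => (m + 1).choose i • T i) (m + 1)]
    have hsplit : ∀ i, (m + 1).choose (i + 1) • T (i + 1)
        = m.choose i • T (i + 1) + m.choose (i + 1) • T (i + 1) := by
      intro i
      rw [Nat.choose_succ_succ, add_smul]
    simp only [hsplit]
    rw [Finset.sum_add_distrib]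
    have hlast : ∑ i ∈ Finset.range (m + 1), m.choose (i + 1) • T (i + 1)
        = ∑ i ∈ Finset.range m, m.choose (i + 1) • T (i + 1) := by
      rw [Finset.sum_range_succ, Nat.choose_succ_self, zero_smul, add_zero]
    have hS2' : ∑ i ∈ Finset.range (m + 1), m.choose i • T i
        = ∑ i ∈ Finset.range m, m.choose (i + 1) • T (i + 1) + (m + 1).choose 0 • T 0 := by
      rw [Finset.sum_range_succ' (fun i => m.choose i • T i) m]
      simp
    rw [hlast, hS2']
    ring_nf
    abel


/-- In characteristic `p`, with `σδ = δσ`: every triple with `[i]+[j]+[k]=[n]` satisfies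
`i+j+k = n`, and there are coefficients `α_{i,j,k}`, not divisible by `p`, such that
`δ^n(axb) = Σ_{[i]+[j]+[k]=[n]} α_{i,j,k} δ^i(σ^{n−i}(a)) δ^j(σ^k(x)) δ^k(b)`. -/
theorem stmt_7 {R : Type*} [Ring R] (p : ℕ) (hp : p.Prime) [CharP R p]
    (σ : R →+* R) (hσ : Function.Bijective σ)
    (δ : R → R) (hδadd : ∀ a b : R, δ (a + b) = δ a + δ b)
    (hleib : ∀ a b : R, δ (a * b) = δ a * b + σ a * δ b)
    (hcomm : ∀ a : R, σ (δ a) = δ (σ a)) (n : ℕ) :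
    (∀ i j k : ℕ, NoCarry3 p i j k n → i + j + k = n) ∧
    ∃ α : ℕ × ℕ × ℕ → ℕ,
      (∀ i j k : ℕ, NoCarry3 p i j k n → ¬ p ∣ α (i, j, k)) ∧
      ∀ a x b : R,
        δ^[n] (a * x * b) =
          ∑ c ∈ (Finset.range (n + 1) ×ˢ Finset.range (n + 1) ×ˢ
              Finset.range (n + 1)).filter (fun c => NoCarry3 p c.1 c.2.1 c.2.2 n),
            α c • (δ^[c.1] ((⇑σ)^[n - c.1] a) * δ^[c.2.1] ((⇑σ)^[c.2.2] x) *
              δ^[c.2.2] b) := by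
  have hp2 : 2 ≤ p := hp.two_le
  have kummer2 : ∀ x y : ℕ, ¬ p ∣ (x + y).choose x ↔ NC2 p x y :=
    fun x y => kummer2_aux p hp (x + y) x y le_rfl
  refine ⟨fun i j k h => noCarry3_sum p hp2 h, ?_⟩
  refine ⟨fun c => n.choose c.1 * (n - c.1).choose c.2.1, ?_, ?_⟩
  · -- nondivisibility
    intro i j k h
    have hsum : i + j + k = n := noCarry3_sum p hp2 h
    have hjk : NC2 p j k := noCarry3_nc2_aux p hp2 (i + j + k) i j k le_rfl (hsum ▸ h)
    have hijk : NC2 p i (j + k) := by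
      intro t
      have h1 := hjk t
      have h2 := h t
      rw [← hsum] at h2
      have : i + (j + k) = i + j + k := by ring
      rw [this]
      omega
    have hni : ¬ p ∣ n.choose i := by
      have : n = i + (j + k) := by omega
      rw [this]
      exact (kummer2 i (j + k)).mpr hijk
    have hnj : ¬ p ∣ (n - i).choose j := by
      have : n - i = j + k := by omega
      rw [this]
      exact (kummer2 j k).mpr hjk
    intro hd
    rcases hp.dvd_mul.mp hd with h' | h'
    · exact hni h'
    · exact hnj h'
  · -- the identity
    intro a x b
    set F : ℕ × ℕ × ℕ → R := fun c =>
      (n.choose c.1 * (n - c.1).choose c.2.1) •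
        (δ^[c.1] ((⇑σ)^[n - c.1] a) * δ^[c.2.1] ((⇑σ)^[c.2.2] x) * δ^[c.2.2] b) with hF
    have lb := skew_leibniz σ δ hδadd hleib hcomm
    have step1 : δ^[n] (a * x * b) =
        ∑ i ∈ Finset.range (n + 1), ∑ j ∈ Finset.range (n - i + 1), F (i, j, n - i - j) := by
      rw [mul_assoc, lb n a (x * b)]
      apply Finset.sum_congr rfl
      intro i _
      rw [lb (n - i) x b, Finset.mul_sum, Finset.smul_sum]
      apply Finset.sum_congr rfl
      intro j _
      rw [mul_smul_comm, smul_smul, hF]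
      simp only []
      rw [← mul_assoc]
    set S := Finset.range (n + 1) ×ˢ Finset.range (n + 1) ×ˢ Finset.range (n + 1) with hS
    set U := S.filter (fun c => c.1 + c.2.1 + c.2.2 = n) with hU
    set T := S.filter (fun c => NoCarry3 p c.1 c.2.1 c.2.2 n) with hT
    have step2 : ∑ i ∈ Finset.range (n + 1), ∑ j ∈ Finset.range (n - i + 1), F (i, j, n - i - j)
        = ∑ c ∈ U, F c := by
      rw [Finset.sum_sigma' (Finset.range (n + 1)) (fun i => Finset.range (n - i + 1))
        (fun i j => F (i, j, n - i - j))]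
      refine Finset.sum_nbij' (fun y => (y.1, y.2, n - y.1 - y.2)) (fun c => ⟨c.1, c.2.1⟩)
        ?_ ?_ ?_ ?_ ?_
      · intro y hy
        simp only [Finset.mem_sigma, Finset.mem_range] at hy
        simp only [hU, hS, Finset.mem_filter, Finset.mem_product, Finset.mem_range]
        omega
      · intro c hc
        simp only [hU, hS, Finset.mem_filter, Finset.mem_product, Finset.mem_range] at hc
        simp only [Finset.mem_sigma, Finset.mem_range]
        omega
      · intro y hy; rfl
      · intro c hc
        simp only [hU, hS, Finset.mem_filter, Finset.mem_product, Finset.mem_range] at hc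
        have : n - c.1 - c.2.1 = c.2.2 := by omega
        simp [this]
      · intro y hy; rfl
    have hTU : T ⊆ U := by
      intro c hc
      simp only [hT, Finset.mem_filter] at hc
      simp only [hU, Finset.mem_filter]
      exact ⟨hc.1, noCarry3_sum p hp2 hc.2⟩
    have step3 : ∑ c ∈ U, F c = ∑ c ∈ T, F c := by
      refine (Finset.sum_subset hTU ?_).symm
      intro c hcU hcT
      simp only [hU, Finset.mem_filter] at hcU
      simp only [hT, Finset.mem_filter] at hcT
      have hnc : ¬ NoCarry3 p c.1 c.2.1 c.2.2 n := fun h => hcT ⟨hcU.1, h⟩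
      have hsum := hcU.2
      -- show p divides the coefficient
      have hdvd : p ∣ n.choose c.1 * (n - c.1).choose c.2.1 := by
        by_contra hnd
        have h1 : ¬ p ∣ n.choose c.1 := fun h => hnd (h.mul_right _)
        have h2 : ¬ p ∣ (n - c.1).choose c.2.1 := fun h => hnd (h.mul_left _)
        have e1 : n = c.1 + (c.2.1 + c.2.2) := by omega
        have e2 : n - c.1 = c.2.1 + c.2.2 := by omega
        rw [e1] at h1
        rw [e2] at h2
        have nc1 : NC2 p c.1 (c.2.1 + c.2.2) := (kummer2 _ _).mp h1
        have nc2 : NC2 p c.2.1 c.2.2 := (kummer2 _ _).mp h2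
        apply hnc
        intro t
        have g1 := nc1 t
        have g2 := nc2 t
        rw [show c.1 + (c.2.1 + c.2.2) = n by omega] at g1
        omega
      rw [hF]
      simp only []
      rw [nsmul_eq_mul]
      rw [(CharP.cast_eq_zero_iff R p _).mpr hdvd, zero_mul]
    rw [step1, step2, step3]
end

section
/- Let p be a prime, R a Noetherian ring of characteristic p, (σ, δ) a skew derivation on R with σ∘δ = δ∘σ, and I a two-sided ideal of R with σ(I) ⊆ I. For each m ∈ ℕ let C_m denote the δ^{p^m}-core of I. Then C_m ⊆ C_{m+1} for all m ∈ ℕ, and there exists M ∈ ℕ such that C_m = C_M for all m ≥ M. -/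
/-! The cores form an ascending chain because `C m` is stable under `σ^{p^m}` and `δ^{p^m}`,
hence under their `p`-th powers `σ^{p^{m+1}}` and `δ^{p^{m+1}}`, so `C m` is one of the ideals
whose sum is `C (m + 1)`. An ascending chain of two-sided ideals in a Noetherian ring stabilises. -/

theorem Set.MapsTo.iterate_pow_succ {α : Type*} {f : α → α} {s : Set α} {p m : ℕ}
    (h : Set.MapsTo f^[p ^ m] s s) : Set.MapsTo f^[p ^ (m + 1)] s s := by
  rw [pow_succ, Function.iterate_mul]
  exact h.iterate p

namespace TwoSidedIdeal

variable {R : Type*} [Ring R]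

def asIdealOrderEmbedding : TwoSidedIdeal R ↪o Ideal R :=
  OrderEmbedding.ofMapLEIff asIdeal fun _ _ =>
    ⟨fun h _ hx => mem_asIdeal.mp (h (mem_asIdeal.mpr hx)), fun h => asIdeal.monotone h⟩

instance [IsNoetherianRing R] : WellFoundedGT (TwoSidedIdeal R) :=
  asIdealOrderEmbedding.wellFoundedGT

end TwoSidedIdeal

theorem stmt_9_general {R : Type*} [Ring R] [IsNoetherianRing R] (p : ℕ)
    (σ : R →+* R)
    (δ : R → R)
    (I : TwoSidedIdeal R)
    (C : ℕ → TwoSidedIdeal R)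
    (hCle : ∀ m, C m ≤ I)
    (hCσ : ∀ m, ∀ x ∈ C m, (⇑σ)^[p ^ m] x ∈ C m)
    (hCδ : ∀ m, ∀ x ∈ C m, δ^[p ^ m] x ∈ C m)
    (hCmax : ∀ m, ∀ J : TwoSidedIdeal R, J ≤ I → (∀ x ∈ J, (⇑σ)^[p ^ m] x ∈ J) →
      (∀ x ∈ J, δ^[p ^ m] x ∈ J) → J ≤ C m) :
    (∀ m, C m ≤ C (m + 1)) ∧ ∃ M, ∀ m, M ≤ m → C m = C M := by
  have mono (m : ℕ) : C m ≤ C (m + 1) :=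
    hCmax (m + 1) (C m) (hCle m) (Set.MapsTo.iterate_pow_succ (hCσ m))
      (Set.MapsTo.iterate_pow_succ (hCδ m))
  obtain ⟨M, hM⟩ := WellFoundedGT.monotone_chain_condition ⟨C, monotone_nat_of_le_succ mono⟩
  exact ⟨mono, M, fun m hm => (hM m hm).symm⟩

/-- Let `R` be Noetherian of characteristic `p`, `(σ, δ)` a skew derivation with
`σδ = δσ`, `I` a two-sided ideal with `σ(I) ⊆ I`, and for each `m` let `C m` be the
`δ^{p^m}`-core of `I` (the largest two-sided ideal `J ⊆ I` with `σ^{p^m}(J) ⊆ J` and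
`δ^{p^m}(J) ⊆ J`).  Then the `C m` are increasing and stabilise. -/
theorem stmt_9 {R : Type*} [Ring R] [IsNoetherianRing R] (p : ℕ) (hp : p.Prime)
    [CharP R p]
    (σ : R →+* R) (hσ : Function.Bijective σ)
    (δ : R → R) (hδadd : ∀ a b : R, δ (a + b) = δ a + δ b)
    (hleib : ∀ a b : R, δ (a * b) = δ a * b + σ a * δ b)
    (hcomm : ∀ a : R, σ (δ a) = δ (σ a))
    (I : TwoSidedIdeal R) (hI : ∀ x ∈ I, σ x ∈ I)
    (C : ℕ → TwoSidedIdeal R)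
    (hCle : ∀ m, C m ≤ I)
    (hCσ : ∀ m, ∀ x ∈ C m, (⇑σ)^[p ^ m] x ∈ C m)
    (hCδ : ∀ m, ∀ x ∈ C m, δ^[p ^ m] x ∈ C m)
    (hCmax : ∀ m, ∀ J : TwoSidedIdeal R, J ≤ I → (∀ x ∈ J, (⇑σ)^[p ^ m] x ∈ J) →
      (∀ x ∈ J, δ^[p ^ m] x ∈ J) → J ≤ C m) :
    (∀ m, C m ≤ C (m + 1)) ∧ ∃ M, ∀ m, M ≤ m → C m = C M :=
  stmt_9_general p σ δ I C hCle hCσ hCδ hCmax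
end

section
/- Let R be an Artinian (hence Noetherian) algebra over a field of characteristic 0, let (σ, δ) be a skew derivation on R with σ∘δ = δ∘σ, and let I be a minimal σ-prime ideal of R. Then δ(I) ⊆ I. -/
section Aux

variable {R : Type*} [Ring R]

-- iterated additive facts
theorem dN_add (δ : R → R) (hδadd : ∀ a b : R, δ (a + b) = δ a + δ b) :
    ∀ (N : ℕ) (a b : R), δ^[N] (a + b) = δ^[N] a + δ^[N] b := by
  intro N
  induction N with
  | zero => intro a b; simp
  | succ N ih =>
    intro a b
    simp only [Function.iterate_succ_apply']
    rw [ih, hδadd]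

theorem d_zero (δ : R → R) (hδadd : ∀ a b : R, δ (a + b) = δ a + δ b) : δ 0 = 0 := by
  have h := hδadd 0 0
  rw [add_zero] at h
  exact (add_eq_right.mp h.symm)

theorem dN_zero (δ : R → R) (hδadd : ∀ a b : R, δ (a + b) = δ a + δ b) :
    ∀ N : ℕ, δ^[N] (0 : R) = 0 := by
  intro N
  induction N with
  | zero => simp
  | succ N ih => rw [Function.iterate_succ_apply, d_zero δ hδadd, ih]

theorem d_neg (δ : R → R) (hδadd : ∀ a b : R, δ (a + b) = δ a + δ b) :
    ∀ x : R, δ (-x) = -δ x := by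
  intro x
  have h : δ (-x) + δ x = 0 := by rw [← hδadd, neg_add_cancel, d_zero δ hδadd]
  exact eq_neg_of_add_eq_zero_left h

theorem dN_neg (δ : R → R) (hδadd : ∀ a b : R, δ (a + b) = δ a + δ b) :
    ∀ (N : ℕ) (x : R), δ^[N] (-x) = -δ^[N] x := by
  intro N
  induction N with
  | zero => simp
  | succ N ih => intro x; simp only [Function.iterate_succ_apply]; rw [d_neg δ hδadd, ih]

theorem dN_sub (δ : R → R) (hδadd : ∀ a b : R, δ (a + b) = δ a + δ b) :
    ∀ (N : ℕ) (x y : R), δ^[N] (x - y) = δ^[N] x - δ^[N] y := by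
  intro N x y
  rw [sub_eq_add_neg, dN_add δ hδadd, dN_neg δ hδadd, sub_eq_add_neg]

-- commuting facts
theorem comm_dN (σ : R →+* R) (δ : R → R) (hcomm : ∀ a : R, σ (δ a) = δ (σ a)) :
    ∀ (N : ℕ) (x : R), σ (δ^[N] x) = δ^[N] (σ x) := by
  intro N
  induction N with
  | zero => intro x; simp
  | succ N ih => intro x; rw [Function.iterate_succ_apply', hcomm, ih,
      ← Function.iterate_succ_apply' δ N (σ x)]

theorem commN_dN (σ : R →+* R) (δ : R → R) (hcomm : ∀ a : R, σ (δ a) = δ (σ a)) :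
    ∀ (n N : ℕ) (x : R), (⇑σ)^[n] (δ^[N] x) = δ^[N] ((⇑σ)^[n] x) := by
  intro n
  induction n with
  | zero => intro N x; simp
  | succ n ih =>
    intro N x
    rw [Function.iterate_succ_apply', ih, comm_dN σ δ hcomm,
      ← Function.iterate_succ_apply' (⇑σ) n x]

theorem sN_mul (σ : R →+* R) : ∀ (n : ℕ) (x y : R),
    (⇑σ)^[n] (x * y) = (⇑σ)^[n] x * (⇑σ)^[n] y := by
  intro n
  induction n with
  | zero => intro x y; simp
  | succ n ih => intro x y; rw [Function.iterate_succ_apply', ih, map_mul,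
      ← Function.iterate_succ_apply' (⇑σ) n x, ← Function.iterate_succ_apply' (⇑σ) n y]

theorem sN_sub (σ : R →+* R) : ∀ (n : ℕ) (x y : R),
    (⇑σ)^[n] (x - y) = (⇑σ)^[n] x - (⇑σ)^[n] y := by
  intro n
  induction n with
  | zero => intro x y; simp
  | succ n ih => intro x y; rw [Function.iterate_succ_apply', ih, map_sub,
      ← Function.iterate_succ_apply' (⇑σ) n x, ← Function.iterate_succ_apply' (⇑σ) n y]

-- ideals and iterates of sigma
theorem mem_sN (I : TwoSidedIdeal R) (σ : R →+* R) (hIσ : ∀ x ∈ I, σ x ∈ I) :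
    ∀ (n : ℕ) (x : R), x ∈ I → (⇑σ)^[n] x ∈ I := by
  intro n
  induction n with
  | zero => intro x hx; exact hx
  | succ n ih => intro x hx; rw [Function.iterate_succ_apply']; exact hIσ _ (ih x hx)

theorem nsmul_mem' (I : TwoSidedIdeal R) : ∀ (c : ℕ) (x : R), x ∈ I → c • x ∈ I := by
  intro c x hx
  induction c with
  | zero => simpa using I.zero_mem
  | succ c ih => rw [succ_nsmul]; exact I.add_mem ih hx

theorem sub_mem_trans (I : TwoSidedIdeal R) {x y : R} (h1 : x - y ∈ I) (h2 : y ∈ I) : x ∈ I := by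
  have := I.add_mem h1 h2
  rwa [sub_add_cancel] at this

end Aux

section Aux2
variable {R : Type*} [Ring R]

-- Artinian: σ x ∈ I → x ∈ I
theorem sigma_inv_mem [IsArtinianRing R] (σ : R →+* R) (hσ : Function.Bijective σ)
    (I : TwoSidedIdeal R) (hIσ : ∀ x ∈ I, σ x ∈ I) :
    ∀ x : R, σ x ∈ I → x ∈ I := by
  let e : R ≃+* R := RingEquiv.ofBijective σ hσ
  have hcoe : ∀ x : R, e x = σ x := fun x => rfl
  let g : ℕ → Ideal R := fun N => (TwoSidedIdeal.asIdeal I).comap ((e.symm : R →+* R) ^ N)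
  have hgmem : ∀ (N : ℕ) (x : R), x ∈ g N ↔ (⇑e.symm)^[N] x ∈ I := by
    intro N x
    show _ ∈ Ideal.comap _ _ ↔ _
    rw [Ideal.mem_comap, RingHom.coe_pow, TwoSidedIdeal.mem_asIdeal]; exact Iff.rfl
  have hmono : ∀ N : ℕ, g (N + 1) ≤ g N := by
    intro N x hx
    rw [hgmem] at hx ⊢
    have h2 : σ ((⇑e.symm)^[N + 1] x) = (⇑e.symm)^[N] x := by
      rw [Function.iterate_succ_apply']
      exact e.apply_symm_apply _
    exact h2 ▸ hIσ _ hx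
  let f : ℕ →o (Ideal R)ᵒᵈ :=
    ⟨fun N => OrderDual.toDual (g N), fun a b hab =>
      (antitone_nat_of_succ_le hmono hab : g b ≤ g a)⟩
  obtain ⟨N, hN⟩ := IsArtinian.monotone_stabilizes f
  have hEq : g N = g (N + 1) := congrArg OrderDual.ofDual (hN (N + 1) (Nat.le_succ N))
  intro x hx
  have hy : (⇑e)^[N + 1] x ∈ g N := by
    rw [hgmem, Function.iterate_succ_apply,
      (Function.LeftInverse.iterate e.symm_apply_apply N) (e x)]
    exact hx
  rw [hEq, hgmem, (Function.LeftInverse.iterate e.symm_apply_apply (N + 1)) x] at hy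
  exact hy

end Aux2

section Aux3
variable {R : Type*} [Ring R]
variable (I : TwoSidedIdeal R) (σ : R →+* R) (δ : R → R)

theorem dN_mul_right_mem
    (hδadd : ∀ a b : R, δ (a + b) = δ a + δ b)
    (hleib : ∀ a b : R, δ (a * b) = δ a * b + σ a * δ b)
    (hcomm : ∀ a : R, σ (δ a) = δ (σ a))
    (hIσ : ∀ x ∈ I, σ x ∈ I) :
    ∀ (N : ℕ) (x r : R), (∀ j, j ≤ N → δ^[j] x ∈ I) → δ^[N] (x * r) ∈ I := by
  intro N
  induction N with
  | zero => intro x r hx; exact I.mul_mem_right x r (hx 0 (le_refl 0))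
  | succ N ih =>
    intro x r hx
    rw [Function.iterate_succ_apply, hleib, dN_add δ hδadd]
    refine I.add_mem (ih (δ x) r ?_) (ih (σ x) (δ r) ?_)
    · intro j hj
      rw [← Function.iterate_succ_apply δ j x]
      exact hx (j + 1) (by omega)
    · intro j hj
      rw [← comm_dN σ δ hcomm]
      exact hIσ _ (hx j (by omega))

theorem dN_mul_left_mem
    (hδadd : ∀ a b : R, δ (a + b) = δ a + δ b)
    (hleib : ∀ a b : R, δ (a * b) = δ a * b + σ a * δ b)
    (hcomm : ∀ a : R, σ (δ a) = δ (σ a))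
    (hIσ : ∀ x ∈ I, σ x ∈ I) :
    ∀ (N : ℕ) (r x : R), (∀ j, j ≤ N → δ^[j] x ∈ I) → δ^[N] (r * x) ∈ I := by
  intro N
  induction N with
  | zero => intro r x hx; exact I.mul_mem_left r x (hx 0 (le_refl 0))
  | succ N ih =>
    intro r x hx
    rw [Function.iterate_succ_apply, hleib, dN_add δ hδadd]
    refine I.add_mem (ih (δ r) x ?_) (ih (σ r) (δ x) ?_)
    · intro j hj
      exact hx j (by omega)
    · intro j hj
      rw [← Function.iterate_succ_apply δ j x]
      exact hx (j + 1) (by omega)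

theorem key_cong
    (hδadd : ∀ a b : R, δ (a + b) = δ a + δ b)
    (hleib : ∀ a b : R, δ (a * b) = δ a * b + σ a * δ b)
    (hcomm : ∀ a : R, σ (δ a) = δ (σ a))
    (hIσ : ∀ x ∈ I, σ x ∈ I) :
    ∀ (s m n : ℕ) (a b : R), m + n = s → (∀ j, j < m → δ^[j] a ∈ I) →
      (∀ j, j < n → δ^[j] b ∈ I) →
      δ^[m + n] (a * b) - (m + n).choose n • ((⇑σ)^[n] (δ^[m] a) * δ^[n] b) ∈ I := by
  intro s
  induction s using Nat.strong_induction_on with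
  | _ s IH =>
    rintro m n a b rfl ha hb
    cases m with
    | zero =>
      cases n with
      | zero => simpa using I.zero_mem
      | succ ν =>
        have hstep : δ^[ν + 1] (a * b) = δ^[ν] (δ a * b) + δ^[ν] (σ a * δ b) := by
          rw [Function.iterate_succ_apply, hleib, dN_add δ hδadd]
        have h1 := IH ν (by omega) 0 ν (δ a) b (by omega)
          (fun j hj => absurd hj (by omega)) (fun j hj => hb j (by omega))
        have h2 := IH ν (by omega) 0 ν (σ a) (δ b) (by omega)
          (fun j hj => absurd hj (by omega))
          (fun j hj => by
            rw [← Function.iterate_succ_apply δ j b]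
            exact hb (j + 1) (by omega))
        simp only [zero_add, Nat.choose_self, one_smul, Function.iterate_zero_apply] at h1 h2 ⊢
        -- h1 : δ^[ν] (δ a * b) - σ^[ν] (δ a) * δ^[ν] b ∈ I
        have t1 : δ^[ν] (δ a * b) ∈ I :=
          sub_mem_trans I h1 (I.mul_mem_left _ _ (hb ν (by omega)))
        rw [← Function.iterate_succ_apply (⇑σ) ν a, ← Function.iterate_succ_apply δ ν b] at h2
        -- h2 : δ^[ν] (σ a * δ b) - σ^[ν+1] a * δ^[ν+1] b ∈ I
        rw [hstep]
        have hEq : δ^[ν] (δ a * b) + δ^[ν] (σ a * δ b) - (⇑σ)^[ν + 1] a * δ^[ν + 1] b =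
            (δ^[ν] (σ a * δ b) - (⇑σ)^[ν + 1] a * δ^[ν + 1] b) + δ^[ν] (δ a * b) := by abel
        rw [hEq]
        exact I.add_mem h2 t1
    | succ μ =>
      cases n with
      | zero =>
        have hstep : δ^[μ + 1] (a * b) = δ^[μ] (δ a * b) + δ^[μ] (σ a * δ b) := by
          rw [Function.iterate_succ_apply, hleib, dN_add δ hδadd]
        have h1 := IH μ (by omega) μ 0 (δ a) b (by omega)
          (fun j hj => by
            rw [← Function.iterate_succ_apply δ j a]
            exact ha (j + 1) (by omega))
          (fun j hj => absurd hj (by omega))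
        simp only [add_zero, Nat.choose_zero_right, one_smul, Function.iterate_zero_apply] at h1 ⊢
        rw [← Function.iterate_succ_apply δ μ a] at h1
        -- h1 : δ^[μ] (δ a * b) - δ^[μ+1] a * b ∈ I
        have h2 := dN_mul_right_mem I σ δ hδadd hleib hcomm hIσ μ (σ a) (δ b)
          (fun j hj => by
            rw [← comm_dN σ δ hcomm]
            exact hIσ _ (ha j (by omega)))
        rw [hstep]
        have hEq : δ^[μ] (δ a * b) + δ^[μ] (σ a * δ b) - δ^[μ + 1] a * b =
            (δ^[μ] (δ a * b) - δ^[μ + 1] a * b) + δ^[μ] (σ a * δ b) := by abel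
        rw [hEq]
        exact I.add_mem h1 h2
      | succ ν =>
        have hidx : μ + 1 + (ν + 1) = μ + (ν + 1) + 1 := by omega
        have hstep : δ^[μ + 1 + (ν + 1)] (a * b) =
            δ^[μ + (ν + 1)] (δ a * b) + δ^[μ + (ν + 1)] (σ a * δ b) := by
          rw [hidx, Function.iterate_succ_apply, hleib, dN_add δ hδadd]
        have h1 := IH (μ + (ν + 1)) (by omega) μ (ν + 1) (δ a) b (by omega)
          (fun j hj => by
            rw [← Function.iterate_succ_apply δ j a]
            exact ha (j + 1) (by omega))
          hb
        rw [← Function.iterate_succ_apply δ μ a] at h1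
        -- h1 : δ^[μ+(ν+1)] (δ a * b) - (μ+(ν+1)).choose (ν+1) • (σ^[ν+1] (δ^[μ+1] a) * δ^[ν+1] b) ∈ I
        have h2 := IH (μ + 1 + ν) (by omega) (μ + 1) ν (σ a) (δ b) (by omega)
          (fun j hj => by
            rw [← comm_dN σ δ hcomm]
            exact hIσ _ (ha j (by omega)))
          (fun j hj => by
            rw [← Function.iterate_succ_apply δ j b]
            exact hb (j + 1) (by omega))
        rw [← comm_dN σ δ hcomm (μ + 1) a,
          ← Function.iterate_succ_apply (⇑σ) ν (δ^[μ + 1] a),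
          ← Function.iterate_succ_apply δ ν b,
          show μ + 1 + ν = μ + (ν + 1) from by omega] at h2
        -- h2 : δ^[μ+(ν+1)] (σ a * δ b) - (μ+(ν+1)).choose ν • (σ^[ν+1] (δ^[μ+1] a) * δ^[ν+1] b) ∈ I
        have hpascal : (μ + 1 + (ν + 1)).choose (ν + 1) =
            (μ + (ν + 1)).choose (ν + 1) + (μ + (ν + 1)).choose ν := by
          rw [show μ + 1 + (ν + 1) = (μ + (ν + 1)) + 1 from by omega, Nat.choose_succ_succ']
          omega
        rw [hstep, hpascal, add_smul]
        have hEq : δ^[μ + (ν + 1)] (δ a * b) + δ^[μ + (ν + 1)] (σ a * δ b) -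
            ((μ + (ν + 1)).choose (ν + 1) • ((⇑σ)^[ν + 1] (δ^[μ + 1] a) * δ^[ν + 1] b) +
             (μ + (ν + 1)).choose ν • ((⇑σ)^[ν + 1] (δ^[μ + 1] a) * δ^[ν + 1] b)) =
            (δ^[μ + (ν + 1)] (δ a * b) -
              (μ + (ν + 1)).choose (ν + 1) • ((⇑σ)^[ν + 1] (δ^[μ + 1] a) * δ^[ν + 1] b)) +
            (δ^[μ + (ν + 1)] (σ a * δ b) -
              (μ + (ν + 1)).choose ν • ((⇑σ)^[ν + 1] (δ^[μ + 1] a) * δ^[ν + 1] b)) := by abel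
        rw [hEq]
        exact I.add_mem h1 h2

end Aux3

theorem nsmul_cancel {k : Type*} [Field k] [CharZero k] {R : Type*} [Ring R] [Algebra k R]
    (I : TwoSidedIdeal R) :
    ∀ (c : ℕ), c ≠ 0 → ∀ x : R, c • x ∈ I → x ∈ I := by
  intro c hc x hx
  have h1 : ((c : k)⁻¹ • (c • x) : R) ∈ I := by
    rw [Algebra.smul_def]
    exact I.mul_mem_left _ _ hx
  rwa [← Nat.cast_smul_eq_nsmul k c x, smul_smul,
    inv_mul_cancel₀ (Nat.cast_ne_zero.mpr hc), one_smul] at h1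

section Clos
variable {R : Type*} [Ring R]

theorem closure_mul_left (S : Set R) (hS : ∀ t x, x ∈ S → t * x ∈ S) :
    ∀ t x, x ∈ AddSubgroup.closure S → t * x ∈ AddSubgroup.closure S := by
  intro t x hx
  refine AddSubgroup.closure_induction
    (p := fun y _ => t * y ∈ AddSubgroup.closure S) ?_ ?_ ?_ ?_ hx
  · intro y hy; exact AddSubgroup.subset_closure (hS t y hy)
  · show t * 0 ∈ AddSubgroup.closure S
    rw [mul_zero]; exact zero_mem _
  · intro y z _ _ hy hz
    show t * (y + z) ∈ AddSubgroup.closure S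
    rw [mul_add]; exact add_mem hy hz
  · intro y _ hy
    show t * (-y) ∈ AddSubgroup.closure S
    rw [mul_neg]; exact neg_mem hy

theorem closure_mul_right (S : Set R) (hS : ∀ t x, x ∈ S → x * t ∈ S) :
    ∀ t x, x ∈ AddSubgroup.closure S → x * t ∈ AddSubgroup.closure S := by
  intro t x hx
  refine AddSubgroup.closure_induction
    (p := fun y _ => y * t ∈ AddSubgroup.closure S) ?_ ?_ ?_ ?_ hx
  · intro y hy; exact AddSubgroup.subset_closure (hS t y hy)
  · show (0 : R) * t ∈ AddSubgroup.closure S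
    rw [zero_mul]; exact zero_mem _
  · intro y z _ _ hy hz
    show (y + z) * t ∈ AddSubgroup.closure S
    rw [add_mul]; exact add_mem hy hz
  · intro y _ hy
    show (-y) * t ∈ AddSubgroup.closure S
    rw [neg_mul]; exact neg_mem hy

theorem closure_map (σ : R →+* R) (S : Set R) (hS : ∀ x ∈ S, σ x ∈ S) :
    ∀ x ∈ AddSubgroup.closure S, σ x ∈ AddSubgroup.closure S := by
  intro x hx
  refine AddSubgroup.closure_induction
    (p := fun y _ => σ y ∈ AddSubgroup.closure S) ?_ ?_ ?_ ?_ hx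
  · intro y hy; exact AddSubgroup.subset_closure (hS y hy)
  · show σ 0 ∈ AddSubgroup.closure S
    rw [map_zero]; exact zero_mem _
  · intro y z _ _ hy hz
    show σ (y + z) ∈ AddSubgroup.closure S
    rw [map_add]; exact add_mem hy hz
  · intro y _ hy
    show σ (-y) ∈ AddSubgroup.closure S
    rw [map_neg]; exact neg_mem hy

theorem closure_mul_mem (I : TwoSidedIdeal R) (S T : Set R)
    (hST : ∀ x ∈ S, ∀ y ∈ T, x * y ∈ I) :
    ∀ x ∈ AddSubgroup.closure S, ∀ y ∈ AddSubgroup.closure T, x * y ∈ I := by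
  intro x hx
  refine AddSubgroup.closure_induction
    (p := fun a _ => ∀ y ∈ AddSubgroup.closure T, a * y ∈ I) ?_ ?_ ?_ ?_ hx
  · intro a ha y hy
    refine AddSubgroup.closure_induction (p := fun b _ => a * b ∈ I) ?_ ?_ ?_ ?_ hy
    · intro b hb; exact hST a ha b hb
    · show a * 0 ∈ I
      rw [mul_zero]; exact I.zero_mem
    · intro b c _ _ h1 h2
      show a * (b + c) ∈ I
      rw [mul_add]; exact I.add_mem h1 h2
    · intro b _ h1
      show a * (-b) ∈ I
      rw [mul_neg]; exact I.neg_mem h1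
  · intro y hy
    show (0 : R) * y ∈ I
    rw [zero_mul]; exact I.zero_mem
  · intro a b _ _ h1 h2 y hy
    show (a + b) * y ∈ I
    rw [add_mul]; exact I.add_mem (h1 y hy) (h2 y hy)
  · intro a _ h1 y hy
    show (-a) * y ∈ I
    rw [neg_mul]; exact I.neg_mem (h1 y hy)

end Clos
/-- `I` is a `σ`-prime ideal: a proper `σ`-ideal such that whenever two `σ`-ideals
`A`, `B` satisfy `AB ⊆ I`, then `A ⊆ I` or `B ⊆ I`. -/
def IsSigmaPrime {R : Type*} [Ring R] (σ : R → R) (I : TwoSidedIdeal R) : Prop :=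
  I ≠ ⊤ ∧ (∀ x ∈ I, σ x ∈ I) ∧
    ∀ A B : TwoSidedIdeal R, (∀ x ∈ A, σ x ∈ A) → (∀ x ∈ B, σ x ∈ B) →
      (∀ a ∈ A, ∀ b ∈ B, a * b ∈ I) → A ≤ I ∨ B ≤ I

/-- Let `R` be an Artinian algebra over a field of characteristic `0`, `(σ, δ)` a skew
derivation with `σδ = δσ`, and `I` a minimal `σ`-prime ideal of `R`.  Then `δ(I) ⊆ I`. -/
theorem stmt_11 {k : Type*} [Field k] [CharZero k] {R : Type*} [Ring R] [Algebra k R]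
    [IsArtinianRing R]
    (σ : R →+* R) (hσ : Function.Bijective σ)
    (δ : R → R) (hδadd : ∀ a b : R, δ (a + b) = δ a + δ b)
    (hleib : ∀ a b : R, δ (a * b) = δ a * b + σ a * δ b)
    (hcomm : ∀ a : R, σ (δ a) = δ (σ a))
    (I : TwoSidedIdeal R) (hIprime : IsSigmaPrime (⇑σ) I)
    (hImin : ∀ J : TwoSidedIdeal R, IsSigmaPrime (⇑σ) J → J ≤ I → J = I) :
    ∀ x ∈ I, δ x ∈ I := by
  classical
  have hIσ : ∀ x ∈ I, σ x ∈ I := hIprime.2.1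
  have hσI' : ∀ x : R, σ x ∈ I → x ∈ I := sigma_inv_mem σ hσ I hIσ
  have hσIN : ∀ (n : ℕ) (x : R), (⇑σ)^[n] x ∈ I → x ∈ I := by
    intro n
    induction n with
    | zero => intro x hx; simpa using hx
    | succ n ih =>
      intro x hx
      rw [Function.iterate_succ_apply] at hx
      exact hσI' x (ih (σ x) hx)
  let C0 : Set R := {x | ∀ N : ℕ, δ^[N] x ∈ I}
  let J : TwoSidedIdeal R := TwoSidedIdeal.mk' C0
    (by intro N; rw [dN_zero δ hδadd]; exact I.zero_mem)
    (by intro x y hx hy N; rw [dN_add δ hδadd]; exact I.add_mem (hx N) (hy N))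
    (by intro x hx N; rw [dN_neg δ hδadd]; exact I.neg_mem (hx N))
    (by intro x y hy N; exact dN_mul_left_mem I σ δ hδadd hleib hcomm hIσ N x y fun j _ => hy j)
    (by intro x y hx N; exact dN_mul_right_mem I σ δ hδadd hleib hcomm hIσ N x y fun j _ => hx j)
  have hJmem : ∀ x : R, x ∈ J ↔ ∀ N : ℕ, δ^[N] x ∈ I := fun x =>
    TwoSidedIdeal.mem_mk' _ _ _ _ _ _ x
  have hJle : J ≤ I := by
    rw [TwoSidedIdeal.le_iff]
    intro x hx
    have hx' : x ∈ J := hx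
    simpa using (hJmem x).mp hx' 0
  have hJσ : ∀ x ∈ J, σ x ∈ J := by
    intro x hx
    rw [hJmem] at hx ⊢
    intro N
    rw [← comm_dN σ δ hcomm]
    exact hIσ _ (hx N)
  have hJne : J ≠ ⊤ := by
    intro h
    apply hIprime.1
    have h1 : (1 : R) ∈ J := by rw [h]; exact TwoSidedIdeal.mem_top _
    have h1I : (1 : R) ∈ I := by simpa using (hJmem 1).mp h1 0
    refine le_antisymm le_top ?_
    rw [TwoSidedIdeal.le_iff]
    intro x _
    have := I.mul_mem_left x 1 h1I
    simpa using this
  have hJprime3 : ∀ A B : TwoSidedIdeal R, (∀ x ∈ A, σ x ∈ A) → (∀ x ∈ B, σ x ∈ B) →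
      (∀ a ∈ A, ∀ b ∈ B, a * b ∈ J) → A ≤ J ∨ B ≤ J := by
    intro A B hAσ hBσ hAB
    by_contra hcon
    push_neg at hcon
    obtain ⟨hAJ, hBJ⟩ := hcon
    rw [TwoSidedIdeal.le_iff, Set.not_subset] at hAJ hBJ
    obtain ⟨a1, ha1A, ha1J⟩ := hAJ
    obtain ⟨b1, hb1B, hb1J⟩ := hBJ
    have hAne : ∃ i : ℕ, ∃ x, x ∈ A ∧ δ^[i] x ∉ I := by
      have hcontra : ¬ ∀ N, δ^[N] a1 ∈ I := fun hall =>
        ha1J (SetLike.mem_coe.mpr ((hJmem a1).mpr hall))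
      push_neg at hcontra
      obtain ⟨N, hN⟩ := hcontra
      exact ⟨N, a1, SetLike.mem_coe.mp ha1A, hN⟩
    have hBne : ∃ i : ℕ, ∃ x, x ∈ B ∧ δ^[i] x ∉ I := by
      have hcontra : ¬ ∀ N, δ^[N] b1 ∈ I := fun hall =>
        hb1J (SetLike.mem_coe.mpr ((hJmem b1).mpr hall))
      push_neg at hcontra
      obtain ⟨N, hN⟩ := hcontra
      exact ⟨N, b1, SetLike.mem_coe.mp hb1B, hN⟩
    obtain ⟨a₀, ha₀A, ha₀⟩ := Nat.find_spec hAne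
    obtain ⟨b₀, hb₀B, hb₀⟩ := Nat.find_spec hBne
    set m := Nat.find hAne with hmdef
    set n := Nat.find hBne with hndef
    have hm2 : ∀ j, j < m → ∀ x, x ∈ A → δ^[j] x ∈ I := by
      intro j hj x hx
      by_contra hc
      exact Nat.find_min hAne hj ⟨x, hx, hc⟩
    have hn2 : ∀ j, j < n → ∀ x, x ∈ B → δ^[j] x ∈ I := by
      intro j hj x hx
      by_contra hc
      exact Nat.find_min hBne hj ⟨x, hx, hc⟩
    have keyrel : ∀ x, x ∈ A → ∀ y, y ∈ B → ∀ r : R,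
        (⇑σ)^[n] (δ^[m] x) * r * δ^[n] y ∈ I := by
      intro x hxA y hyB r
      obtain ⟨r', rfl⟩ := (hσ.iterate n).surjective r
      have hxr' : x * r' ∈ A := A.mul_mem_right x r' hxA
      have h1 : δ^[m + n] (x * r' * y) ∈ I := (hJmem _).mp (hAB _ hxr' _ hyB) (m + n)
      have h2 := key_cong I σ δ hδadd hleib hcomm hIσ (m + n) m n (x * r') y rfl
        (fun j hj => hm2 j hj _ hxr') (fun j hj => hn2 j hj _ hyB)
      have h3 : (m + n).choose n • ((⇑σ)^[n] (δ^[m] (x * r')) * δ^[n] y) ∈ I := by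
        have := I.sub_mem h1 h2
        rwa [sub_sub_cancel] at this
      have h4 : (⇑σ)^[n] (δ^[m] (x * r')) * δ^[n] y ∈ I :=
        nsmul_cancel (k := k) I _ (Nat.choose_pos (Nat.le_add_left n m)).ne' _ h3
      have h5 := key_cong I σ δ hδadd hleib hcomm hIσ m m 0 x r' rfl
        (fun j hj => hm2 j hj _ hxA) (fun j hj => absurd hj (by omega))
      simp only [add_zero, Nat.choose_zero_right, one_smul, Function.iterate_zero_apply] at h5
      have h6 : (⇑σ)^[n] (δ^[m] (x * r')) - (⇑σ)^[n] (δ^[m] x * r') ∈ I := by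
        have := mem_sN I σ hIσ n _ h5
        rwa [sN_sub σ] at this
      have h7 := I.mul_mem_right _ (δ^[n] y) h6
      have h8 : (⇑σ)^[n] (δ^[m] x * r') * δ^[n] y ∈ I := by
        have := I.sub_mem h4 h7
        rwa [← sub_mul, sub_sub_cancel] at this
      rwa [sN_mul σ] at h8
    have keyuv : ∀ (K L : ℕ) (r : R),
        (⇑σ)^[K] ((⇑σ)^[n] (δ^[m] a₀)) * r * (⇑σ)^[L] (δ^[n] b₀) ∈ I := by
      intro K L r
      have h := keyrel _ (mem_sN A σ hAσ K a₀ ha₀A) _ (mem_sN B σ hBσ L b₀ hb₀B) r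
      rwa [← commN_dN σ δ hcomm K m a₀, ← commN_dN σ δ hcomm L n b₀,
        ← Function.iterate_add_apply (⇑σ) n K (δ^[m] a₀), add_comm n K,
        Function.iterate_add_apply (⇑σ) K n (δ^[m] a₀)] at h
    set SU : Set R :=
      {x | ∃ r s : R, ∃ K : ℕ, x = r * (⇑σ)^[K] ((⇑σ)^[n] (δ^[m] a₀)) * s} with hSUdef
    set SV : Set R := {x | ∃ r s : R, ∃ L : ℕ, x = r * (⇑σ)^[L] (δ^[n] b₀) * s} with hSVdef
    have hSUl : ∀ t x, x ∈ SU → t * x ∈ SU := by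
      rintro t x ⟨r, s, K, rfl⟩
      exact ⟨t * r, s, K, by simp [mul_assoc]⟩
    have hSUr : ∀ t x, x ∈ SU → x * t ∈ SU := by
      rintro t x ⟨r, s, K, rfl⟩
      exact ⟨r, s * t, K, by simp [mul_assoc]⟩
    have hSUσ : ∀ x ∈ SU, σ x ∈ SU := by
      rintro x ⟨r, s, K, rfl⟩
      refine ⟨σ r, σ s, K + 1, ?_⟩
      rw [map_mul, map_mul, Function.iterate_succ_apply' (⇑σ) K _]
    have hSVl : ∀ t x, x ∈ SV → t * x ∈ SV := by
      rintro t x ⟨r, s, L, rfl⟩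
      exact ⟨t * r, s, L, by simp [mul_assoc]⟩
    have hSVr : ∀ t x, x ∈ SV → x * t ∈ SV := by
      rintro t x ⟨r, s, L, rfl⟩
      exact ⟨r, s * t, L, by simp [mul_assoc]⟩
    have hSVσ : ∀ x ∈ SV, σ x ∈ SV := by
      rintro x ⟨r, s, L, rfl⟩
      refine ⟨σ r, σ s, L + 1, ?_⟩
      rw [map_mul, map_mul, Function.iterate_succ_apply' (⇑σ) L _]
    let A' : TwoSidedIdeal R := TwoSidedIdeal.mk' (↑(AddSubgroup.closure SU))
      (zero_mem _) (fun {x y} hx hy => add_mem hx hy) (fun {x} hx => neg_mem hx)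
      (fun {x y} hy => closure_mul_left SU hSUl x y hy)
      (fun {x y} hx => closure_mul_right SU hSUr y x hx)
    let B' : TwoSidedIdeal R := TwoSidedIdeal.mk' (↑(AddSubgroup.closure SV))
      (zero_mem _) (fun {x y} hx hy => add_mem hx hy) (fun {x} hx => neg_mem hx)
      (fun {x y} hy => closure_mul_left SV hSVl x y hy)
      (fun {x y} hx => closure_mul_right SV hSVr y x hx)
    have hA'mem : ∀ x : R, x ∈ A' ↔ x ∈ AddSubgroup.closure SU := fun x =>
      TwoSidedIdeal.mem_mk' _ _ _ _ _ _ x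
    have hB'mem : ∀ x : R, x ∈ B' ↔ x ∈ AddSubgroup.closure SV := fun x =>
      TwoSidedIdeal.mem_mk' _ _ _ _ _ _ x
    have hA'σ : ∀ x ∈ A', σ x ∈ A' := fun x hx =>
      (hA'mem _).mpr (closure_map σ SU hSUσ x ((hA'mem x).mp hx))
    have hB'σ : ∀ x ∈ B', σ x ∈ B' := fun x hx =>
      (hB'mem _).mpr (closure_map σ SV hSVσ x ((hB'mem x).mp hx))
    have hgen : ∀ x ∈ SU, ∀ y ∈ SV, x * y ∈ I := by
      rintro x ⟨r, s, K, rfl⟩ y ⟨r', s', L, rfl⟩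
      have h := keyuv K L (s * r')
      have h2 := I.mul_mem_left r _ (I.mul_mem_right _ s' h)
      have heq : r * (⇑σ)^[K] ((⇑σ)^[n] (δ^[m] a₀)) * s * (r' * (⇑σ)^[L] (δ^[n] b₀) * s') =
          r * ((⇑σ)^[K] ((⇑σ)^[n] (δ^[m] a₀)) * (s * r') * (⇑σ)^[L] (δ^[n] b₀) * s') := by
        simp [mul_assoc]
      rw [heq]
      exact h2
    have hA'B' : ∀ a ∈ A', ∀ b ∈ B', a * b ∈ I := fun a ha b hb =>
      closure_mul_mem I SU SV hgen a ((hA'mem a).mp ha) b ((hB'mem b).mp hb)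
    rcases hIprime.2.2 A' B' hA'σ hB'σ hA'B' with h | h
    · have huA : (⇑σ)^[n] (δ^[m] a₀) ∈ A' := (hA'mem _).mpr
        (AddSubgroup.subset_closure ⟨1, 1, 0, by simp⟩)
      have huI := TwoSidedIdeal.le_iff.mp h (SetLike.mem_coe.mpr huA)
      exact ha₀ (hσIN n _ (SetLike.mem_coe.mp huI))
    · have hvB : δ^[n] b₀ ∈ B' := (hB'mem _).mpr
        (AddSubgroup.subset_closure ⟨1, 1, 0, by simp⟩)
      have hvI := TwoSidedIdeal.le_iff.mp h (SetLike.mem_coe.mpr hvB)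
      exact hb₀ (SetLike.mem_coe.mp hvI)
  have hJeq : J = I := hImin J ⟨hJne, hJσ, hJprime3⟩ hJle
  intro x hx
  have hxJ : x ∈ J := by rw [hJeq]; exact hx
  have hd := (hJmem x).mp hxJ 1
  simpa using hd
end

section
/- Let Q be a ring, O a subring of Q, and J a two-sided ideal of O. Let K = {x ∈ Q : jx ∈ O for every j ∈ J}, and assume: KJ ⊆ O; every element of O is a finite sum of products jk with j ∈ J and k ∈ K; and every element of O is a finite sum of products kj with k ∈ K and j ∈ J. For n ≥ 1 let J^n (resp. K^n) denote the set of finite sums of n-fold products of elements of J (resp. of K), and set J^0 = K^0 = O. Let τ be a ring automorphism of Q with τ(O) = O and τ(J) = J, and let d : Q → Q be an additive map satisfying d(ab) = d(a)b + τ(a)d(b) for all a, b ∈ Q. If d(O) ⊆ J and d(J) ⊆ J², then d(J^n) ⊆ J^{n+1} for all n ≥ 0, and d(K^n) ⊆ K^{n−1} for all n ≥ 1. -/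
/-- `powSet S O n`: for `n ≥ 1`, the set of finite sums of `n`-fold products of
elements of `S`; for `n = 0`, the subring `O` itself. -/
def powSet {Q : Type*} [Ring Q] (S : Set Q) (O : Subring Q) : ℕ → Set Q := fun n =>
  if n = 0 then (O : Set Q)
  else (AddSubmonoid.closure {x | ∃ l : List Q, l.length = n ∧ (∀ y ∈ l, y ∈ S) ∧
    x = l.prod} : Set Q)

/-- `invSet O J = K = {x ∈ Q : jx ∈ O for all j ∈ J}`. -/
def invSet {Q : Type*} [Ring Q] (O : Subring Q) (J : Set Q) : Set Q :=
  {x | ∀ j ∈ J, j * x ∈ (O : Set Q)}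

section Stmt15Aux
variable {Q : Type*} [Ring Q] {S : Set Q} {O : Subring Q}

lemma powSet_succ (S : Set Q) (O : Subring Q) (n : ℕ) :
    powSet S O (n+1) = (AddSubmonoid.closure {x | ∃ l : List Q, l.length = n+1 ∧
      (∀ y ∈ l, y ∈ S) ∧ x = l.prod} : Set Q) := by
  simp [powSet]

lemma powSet_zero (S : Set Q) (O : Subring Q) : powSet S O 0 = (O : Set Q) := by
  simp [powSet]

lemma prod_mem_powSet {n : ℕ} {l : List Q} (hlen : l.length = n + 1)
    (hmem : ∀ y ∈ l, y ∈ S) : l.prod ∈ powSet S O (n + 1) := by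
  rw [powSet_succ]
  exact AddSubmonoid.subset_closure ⟨l, hlen, hmem, rfl⟩

lemma mem_powSet_single {x : Q} (hx : x ∈ S) : x ∈ powSet S O 1 := by
  simpa using prod_mem_powSet (O := O) (l := [x]) rfl (by simpa using hx)

lemma powSet_zero_mem (S : Set Q) (O : Subring Q) (n : ℕ) : (0 : Q) ∈ powSet S O n := by
  cases n with
  | zero => rw [powSet_zero]; exact O.zero_mem
  | succ n => rw [powSet_succ]; exact (AddSubmonoid.closure _).zero_mem

lemma powSet_add_mem {n : ℕ} {a b : Q} (ha : a ∈ powSet S O n) (hb : b ∈ powSet S O n) :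
    a + b ∈ powSet S O n := by
  cases n with
  | zero => rw [powSet_zero] at *; exact O.add_mem ha hb
  | succ n =>
    rw [powSet_succ] at *
    exact (AddSubmonoid.closure _).add_mem ha hb

lemma powSet_mul {m n : ℕ} (hm : m ≠ 0) (hn : n ≠ 0) {a b : Q}
    (ha : a ∈ powSet S O m) (hb : b ∈ powSet S O n) : a * b ∈ powSet S O (m + n) := by
  obtain ⟨m, rfl⟩ := Nat.exists_eq_succ_of_ne_zero hm
  obtain ⟨n, rfl⟩ := Nat.exists_eq_succ_of_ne_zero hn
  have hidx : m + 1 + (n + 1) = (m + n + 1) + 1 := by omega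
  rw [hidx, powSet_succ]
  rw [powSet_succ] at ha hb
  have hgen : ∀ x ∈ {x : Q | ∃ l : List Q, l.length = m+1 ∧ (∀ y ∈ l, y ∈ S) ∧ x = l.prod},
      x * b ∈ AddSubmonoid.closure {x : Q | ∃ l : List Q, l.length = (m+n+1)+1 ∧
        (∀ y ∈ l, y ∈ S) ∧ x = l.prod} := by
    intro x hx
    refine AddSubmonoid.closure_induction (fun y hy => ?_)
      (by rw [mul_zero]; exact (AddSubmonoid.closure _).zero_mem)
      (fun y z hy hz py pz => by
        rw [mul_add]; exact (AddSubmonoid.closure _).add_mem py pz) hb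
    obtain ⟨l1, hl1, hm1, rfl⟩ := hx
    obtain ⟨l2, hl2, hm2, rfl⟩ := hy
    refine AddSubmonoid.subset_closure ⟨l1 ++ l2, ?_, ?_, ?_⟩
    · simp [hl1, hl2]; omega
    · intro y hy; rcases List.mem_append.mp hy with h | h
      · exact hm1 y h
      · exact hm2 y h
    · rw [List.prod_append]
  refine AddSubmonoid.closure_induction (fun x hx => hgen x hx)
    (by rw [zero_mul]; exact (AddSubmonoid.closure _).zero_mem)
    (fun x y hx hy px py => by
      rw [add_mul]; exact (AddSubmonoid.closure _).add_mem px py) ha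

end Stmt15Aux

/-- Lemma on compatibility of a `τ`-derivation with the `J(O)`-adic filtration:
if `J` is an invertible two-sided ideal of the subring `O ⊆ Q`, `τ` an automorphism of
`Q` preserving `O` and `J`, and `d` a `τ`-derivation with `d(O) ⊆ J`, `d(J) ⊆ J²`, then
`d(J^n) ⊆ J^{n+1}` for all `n ≥ 0` and `d(K^n) ⊆ K^{n−1}` for all `n ≥ 1`. -/


theorem stmt_15 {Q : Type*} [Ring Q] (O : Subring Q) (J : Set Q)
    -- `J` is a two-sided ideal of `O`:
    (hJO : J ⊆ (O : Set Q)) (hJ0 : (0 : Q) ∈ J)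
    (hJadd : ∀ a ∈ J, ∀ b ∈ J, a + b ∈ J) (hJneg : ∀ a ∈ J, -a ∈ J)
    (hJl : ∀ a ∈ (O : Set Q), ∀ j ∈ J, a * j ∈ J)
    (hJr : ∀ j ∈ J, ∀ a ∈ (O : Set Q), j * a ∈ J)
    -- `KJ ⊆ O`:
    (hKJ : ∀ x ∈ invSet O J, ∀ j ∈ J, x * j ∈ (O : Set Q))
    -- every element of `O` is a finite sum of products `jk`, and of products `kj`:
    (hOJK : (O : Set Q) ⊆
      (AddSubmonoid.closure {x | ∃ j ∈ J, ∃ k ∈ invSet O J, x = j * k} : Set Q))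
    (hOKJ : (O : Set Q) ⊆
      (AddSubmonoid.closure {x | ∃ k ∈ invSet O J, ∃ j ∈ J, x = k * j} : Set Q))
    -- `τ` is a ring automorphism of `Q` with `τ(O) = O`, `τ(J) = J`:
    (τ : Q →+* Q) (hτ : Function.Bijective τ)
    (hτO : (fun x : Q => τ x) '' (O : Set Q) = (O : Set Q))
    (hτJ : (fun x : Q => τ x) '' J = J)
    -- `d` is a `τ`-derivation:
    (d : Q → Q) (hdadd : ∀ a b : Q, d (a + b) = d a + d b)
    (hdleib : ∀ a b : Q, d (a * b) = d a * b + τ a * d b)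
    (hdO : ∀ x ∈ (O : Set Q), d x ∈ J)
    (hdJ : ∀ x ∈ J, d x ∈ powSet J O 2) :
    (∀ n : ℕ, ∀ x ∈ powSet J O n, d x ∈ powSet J O (n + 1)) ∧
    (∀ n : ℕ, 1 ≤ n → ∀ x ∈ powSet (invSet O J) O n, d x ∈ powSet (invSet O J) O (n - 1)) := by
  set K := invSet O J with hKdef
  have hd0 : d 0 = 0 := by
    have h := hdadd 0 0
    rw [add_zero] at h
    have h2 : d 0 + 0 = d 0 + d 0 := by rw [add_zero]; exact h
    exact (add_left_cancel h2).symm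
  have hτJ' : ∀ j ∈ J, τ j ∈ J := fun j hj => hτJ ▸ ⟨j, hj, rfl⟩
  have hτO' : ∀ a ∈ (O : Set Q), τ a ∈ (O : Set Q) := fun a ha => hτO ▸ ⟨a, ha, rfl⟩
  have hτJinv : ∀ j ∈ J, ∃ j' ∈ J, τ j' = j := by
    intro j hj
    rw [← hτJ] at hj
    obtain ⟨j', hj', hjj⟩ := hj
    exact ⟨j', hj', hjj⟩
  have hJK : ∀ j ∈ J, ∀ k ∈ K, j * k ∈ (O : Set Q) := fun j hj k hk => hk j hj
  have hτK : ∀ k ∈ K, τ k ∈ K := by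
    intro k hk j hj
    obtain ⟨j', hj', rfl⟩ := hτJinv j hj
    rw [← map_mul]
    exact hτO' _ (hk j' hj')
  have hOK : ∀ a ∈ (O : Set Q), ∀ k ∈ K, a * k ∈ K := by
    intro a ha k hk j hj
    rw [← mul_assoc]
    exact hk _ (hJr j hj a ha)
  have hKO : ∀ k ∈ K, ∀ a ∈ (O : Set Q), k * a ∈ K := by
    intro k hk a ha j hj
    rw [← mul_assoc]
    exact O.mul_mem (hk j hj) ha
  -- K * J² ⊆ J
  have hKJsq : ∀ k ∈ K, ∀ y ∈ powSet J O 2, k * y ∈ J := by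
    intro k hk y hy
    rw [show (2:ℕ) = 1 + 1 from rfl, powSet_succ] at hy
    refine AddSubmonoid.closure_induction (fun z hz => ?_)
      (by rw [mul_zero]; exact hJ0)
      (fun z w hz hw pz pw => by rw [mul_add]; exact hJadd _ pz _ pw) hy
    obtain ⟨l, hlen, hmem, rfl⟩ := hz
    obtain ⟨a, b, rfl⟩ := List.length_eq_two.mp hlen
    have : List.prod [a, b] = a * b := by simp
    rw [this, ← mul_assoc]
    exact hJl _ (hKJ k hk a (hmem a (by simp))) b (hmem b (by simp))
  have hdKJ : ∀ k ∈ K, ∀ j ∈ J, d k * j ∈ J := by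
    intro k hk j hj
    have h1 : d (k * j) ∈ J := hdO _ (hKJ k hk j hj)
    have h2 : τ k * d j ∈ J := hKJsq (τ k) (hτK k hk) _ (hdJ j hj)
    have h3 : d k * j = d (k * j) + -(τ k * d j) := by
      rw [hdleib]; exact (add_neg_cancel_right _ _).symm
    rw [h3]
    exact hJadd _ h1 _ (hJneg _ h2)
  have hdK : ∀ k ∈ K, d k ∈ (O : Set Q) := by
    intro k hk
    have h1 : (1 : Q) ∈ AddSubmonoid.closure {x : Q | ∃ j ∈ J, ∃ k' ∈ K, x = j * k'} :=
      hOJK O.one_mem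
    have h2 : ∀ y ∈ AddSubmonoid.closure {x : Q | ∃ j ∈ J, ∃ k' ∈ K, x = j * k'},
        d k * y ∈ (O : Set Q) := by
      intro y hy
      refine AddSubmonoid.closure_induction (fun z hz => ?_)
        (by rw [mul_zero]; exact O.zero_mem)
        (fun z w hz hw pz pw => by rw [mul_add]; exact O.add_mem pz pw) hy
      obtain ⟨j, hj, k', hk', rfl⟩ := hz
      rw [← mul_assoc]
      exact hk' _ (hdKJ k hk j hj)
    have := h2 1 h1
    rwa [mul_one] at this
  -- Part 1
  have part1 : ∀ n : ℕ, ∀ x ∈ powSet J O n, d x ∈ powSet J O (n + 1) := by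
    intro n
    induction n with
    | zero =>
      intro x hx
      rw [powSet_zero] at hx
      exact mem_powSet_single (hdO x hx)
    | succ n ih =>
      intro x hx
      rw [powSet_succ] at hx
      refine AddSubmonoid.closure_induction (fun y hy => ?_)
        (by rw [hd0]; exact powSet_zero_mem _ _ _)
        (fun y z hy hz py pz => by rw [hdadd]; exact powSet_add_mem py pz) hx
      obtain ⟨l, hlen, hmem, rfl⟩ := hy
      obtain ⟨a, t, rfl⟩ := List.exists_of_length_succ l hlen
      have hta : a ∈ J := hmem a (by simp)
      have hlt : t.length = n := by simpa using hlen
      cases n with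
      | zero =>
        have ht : t = [] := List.length_eq_zero_iff.mp hlt
        subst ht
        simp only [List.prod_cons, List.prod_nil, mul_one]
        exact hdJ a hta
      | succ m =>
        rw [List.prod_cons, hdleib]
        have htp : t.prod ∈ powSet J O (m + 1) := prod_mem_powSet hlt (fun y hy => hmem y (by simp [hy]))
        have h1 : d a * t.prod ∈ powSet J O (2 + (m + 1)) :=
          powSet_mul (by omega) (by omega) (hdJ a hta) htp
        have h2 : τ a * d t.prod ∈ powSet J O (1 + (m + 1 + 1)) :=
          powSet_mul (by omega) (by omega) (mem_powSet_single (hτJ' a hta)) (ih t.prod htp)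
        have e1 : 2 + (m + 1) = m + 1 + 1 + 1 := by omega
        have e2 : 1 + (m + 1 + 1) = m + 1 + 1 + 1 := by omega
        rw [e1] at h1
        rw [e2] at h2
        exact powSet_add_mem h1 h2
  refine ⟨part1, ?_⟩
  -- Part 2
  have hO_mul : ∀ m : ℕ, ∀ c ∈ (O : Set Q), ∀ y ∈ powSet K O (m + 1),
      c * y ∈ powSet K O (m + 1) := by
    intro m c hc y hy
    rw [powSet_succ] at hy ⊢
    refine AddSubmonoid.closure_induction (fun z hz => ?_)
      (by rw [mul_zero]; exact (AddSubmonoid.closure _).zero_mem)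
      (fun z w hz hw pz pw => by rw [mul_add]; exact (AddSubmonoid.closure _).add_mem pz pw) hy
    obtain ⟨l, hlen, hmem, rfl⟩ := hz
    obtain ⟨b, t, rfl⟩ := List.exists_of_length_succ l hlen
    refine AddSubmonoid.subset_closure ⟨(c * b) :: t, by simpa using hlen, ?_, by
      rw [List.prod_cons, List.prod_cons, mul_assoc]⟩
    intro y hy
    rcases List.mem_cons.mp hy with h | h
    · subst h; exact hOK c hc b (hmem b (by simp))
    · exact hmem y (by simp [h])
  have aux : ∀ m : ℕ, ∀ x ∈ powSet K O (m + 1), d x ∈ powSet K O m := by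
    intro m
    induction m with
    | zero =>
      intro x hx
      rw [powSet_succ] at hx
      rw [powSet_zero]
      refine AddSubmonoid.closure_induction (fun y hy => ?_)
        (by rw [hd0]; exact O.zero_mem)
        (fun y z hy hz py pz => by rw [hdadd]; exact O.add_mem py pz) hx
      obtain ⟨l, hlen, hmem, rfl⟩ := hy
      obtain ⟨a, t, rfl⟩ := List.exists_of_length_succ l hlen
      have ht : t = [] := List.length_eq_zero_iff.mp (by simpa using hlen)
      subst ht
      simp only [List.prod_cons, List.prod_nil, mul_one]
      exact hdK a (hmem a (by simp))
    | succ m ih =>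
      intro x hx
      rw [powSet_succ] at hx
      refine AddSubmonoid.closure_induction (fun y hy => ?_)
        (by rw [hd0]; exact powSet_zero_mem _ _ _)
        (fun y z hy hz py pz => by rw [hdadd]; exact powSet_add_mem py pz) hx
      obtain ⟨l, hlen, hmem, rfl⟩ := hy
      obtain ⟨a, t, rfl⟩ := List.exists_of_length_succ l hlen
      have hta : a ∈ K := hmem a (by simp)
      have hlt : t.length = m + 1 := by simpa using hlen
      have htp : t.prod ∈ powSet K O (m + 1) :=
        prod_mem_powSet hlt (fun y hy => hmem y (by simp [hy]))
      rw [List.prod_cons, hdleib]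
      have h1 : d a * t.prod ∈ powSet K O (m + 1) :=
        hO_mul m _ (hdK a hta) _ htp
      have h2 : τ a * d t.prod ∈ powSet K O (m + 1) := by
        have hdt := ih t.prod htp
        cases m with
        | zero =>
          rw [powSet_zero] at hdt
          exact mem_powSet_single (hKO (τ a) (hτK a hta) _ hdt)
        | succ p =>
          have := powSet_mul (S := K) (O := O) (m := 1) (n := p + 1) (by omega) (by omega)
            (mem_powSet_single (hτK a hta)) hdt
          rwa [show 1 + (p + 1) = p + 1 + 1 from by omega] at this
      exact powSet_add_mem h1 h2
  intro n hn x hx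
  obtain ⟨m, rfl⟩ := Nat.exists_eq_succ_of_ne_zero (by omega : n ≠ 0)
  simpa using aux m x hx
end

section
/- Let R be a ring, w : R → ℤ ∪ {∞} a filtration on R, and (σ, δ) a skew derivation on R satisfying w(σ(r) − r) ≥ w(r) + 1 and w(δ(r)) ≥ w(r) + 1 for all r ∈ R. Let I be a two-sided ideal of R with σ(I) = I and δ(I) ⊆ I, and let (σ̄, δ̄) be the induced skew derivation on the quotient ring R/I. Define the quotient filtration w̄ on R/I by w̄(r + I) = sup{w(r + y) : y ∈ I} (supremum in ℤ ∪ {∞}). Then w̄(σ̄(ξ) − ξ) ≥ w̄(ξ) + 1 and w̄(δ̄(ξ)) ≥ w̄(ξ) + 1 for every ξ ∈ R/I. -/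
/-! Both `σ - id` and `δ` are additive and map `I` into itself, so they send each representative
`r + y` of `r + I` to a representative of the image class while raising `w` by one; taking
suprema over representatives gives the bounds. -/

lemma WithTop.csSup_add_one_le {A : Set (WithTop ℤ)} {b : WithTop ℤ} (hA : A.Nonempty)
    (h : ∀ a ∈ A, a + 1 ≤ b) : sSup A + 1 ≤ b := by
  induction b using WithTop.recTopCoe with
  | top => exact le_top
  | coe n =>
    have hn : ((n : ℤ) : WithTop ℤ) = ((n - 1 : ℤ) : WithTop ℤ) + 1 := by norm_cast; omega
    simp only [hn, WithTop.add_le_add_iff_right WithTop.one_ne_top] at h ⊢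
    exact csSup_le hA h

noncomputable def quotientFiltration {R : Type*} [Add R] (w : R → WithTop ℤ) (I : Set R) (r : R) :
    WithTop ℤ :=
  sSup (w '' {s | ∃ y ∈ I, s = r + y})

theorem quotientFiltration_add_one_le_of_map {R : Type*} [AddZeroClass R]
    (w : R → WithTop ℤ) {I : Set R} (hI : (0 : R) ∈ I) (φ : R →+ R) (hφI : ∀ y ∈ I, φ y ∈ I)
    (hφw : ∀ r, w r + 1 ≤ w (φ r)) (r : R) :
    quotientFiltration w I r + 1 ≤ quotientFiltration w I (φ r) := by
  refine WithTop.csSup_add_one_le ⟨w (r + 0), r + 0, ⟨0, hI, rfl⟩, rfl⟩ ?_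
  rintro _ ⟨_, ⟨y, hy, rfl⟩, rfl⟩
  calc w (r + y) + 1 ≤ w (φ r + φ y) := map_add φ r y ▸ hφw (r + y)
    _ ≤ quotientFiltration w I (φ r) :=
      le_csSup (OrderTop.bddAbove _) ⟨_, ⟨φ y, hφI y hy, rfl⟩, rfl⟩

theorem stmt_16_general {R : Type*} [Ring R]
    (w : R → WithTop ℤ)
    (σ : R →+* R)
    (δ : R → R) (hδadd : ∀ a b : R, δ (a + b) = δ a + δ b)
    (hcσ : ∀ r : R, w r + 1 ≤ w (σ r - r)) (hcδ : ∀ r : R, w r + 1 ≤ w (δ r))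
    (I : TwoSidedIdeal R)
    (hIσ : (fun x : R => σ x) '' (I : Set R) = (I : Set R))
    (hIδ : ∀ x ∈ I, δ x ∈ I) :
    ∀ r : R,
      sSup (w '' {s | ∃ y ∈ I, s = r + y}) + 1 ≤
        sSup (w '' {s | ∃ y ∈ I, s = σ r - r + y}) ∧
      sSup (w '' {s | ∃ y ∈ I, s = r + y}) + 1 ≤
        sSup (w '' {s | ∃ y ∈ I, s = δ r + y}) := by
  intro r
  have hσI : ∀ y ∈ I, σ y ∈ I := fun y hy => hIσ.subset ⟨y, hy, rfl⟩
  exact ⟨quotientFiltration_add_one_le_of_map w (I := I) I.zero_mem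
      (σ.toAddMonoidHom - AddMonoidHom.id R) (fun y hy => I.sub_mem (hσI y hy) hy) hcσ r,
    quotientFiltration_add_one_le_of_map w (I := I) I.zero_mem
      (AddMonoidHom.mk' δ hδadd) hIδ hcδ r⟩

/-- Let `w` be a filtration on `R`, `(σ, δ)` a skew derivation compatible with `w`
(`w(σ(r) − r) ≥ w(r) + 1` and `w(δ(r)) ≥ w(r) + 1`), and `I` a two-sided ideal with
`σ(I) = I` and `δ(I) ⊆ I`.  Then the quotient filtration
`w̄(r + I) = sup{w(r + y) : y ∈ I}` on `R/I` satisfies `w̄(σ̄(ξ) − ξ) ≥ w̄(ξ) + 1` and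
`w̄(δ̄(ξ)) ≥ w̄(ξ) + 1` for every `ξ = r + I`. -/
theorem stmt_16 {R : Type*} [Ring R]
    (w : R → WithTop ℤ) (hw0 : w 0 = ⊤)
    (hwadd : ∀ x y : R, min (w x) (w y) ≤ w (x + y))
    (hwmul : ∀ x y : R, w x + w y ≤ w (x * y))
    (σ : R →+* R) (hσ : Function.Bijective σ)
    (δ : R → R) (hδadd : ∀ a b : R, δ (a + b) = δ a + δ b)
    (hleib : ∀ a b : R, δ (a * b) = δ a * b + σ a * δ b)
    (hcσ : ∀ r : R, w r + 1 ≤ w (σ r - r)) (hcδ : ∀ r : R, w r + 1 ≤ w (δ r))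
    (I : TwoSidedIdeal R)
    (hIσ : (fun x : R => σ x) '' (I : Set R) = (I : Set R))
    (hIδ : ∀ x ∈ I, δ x ∈ I) :
    ∀ r : R,
      sSup (w '' {s | ∃ y ∈ I, s = r + y}) + 1 ≤
        sSup (w '' {s | ∃ y ∈ I, s = σ r - r + y}) ∧
      sSup (w '' {s | ∃ y ∈ I, s = r + y}) + 1 ≤
        sSup (w '' {s | ∃ y ∈ I, s = δ r + y}) :=
  stmt_16_general w σ δ hδadd hcσ hcδ I hIσ hIδ
end
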